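/- arXiv:1409.6988 — 6 statements merged into one kernel-verified Lean document; each statement's English description precedes it below -/
import Mathlib

section
/- Let T > 0, A ≥ 0 and α ∈ (0,1]. Let F : [0,T] → ℝ be twice continuously differentiable with F ≥ 0, F(0) = F′(0) = 0, F′(t) ≥ 0 for all t ∈ [0,T], and F″(t) ≤ A · F(t)^{1−α} for all t ∈ [0,T]. Then F(t) ≤ ( (α/2) · √(2A) · t )^{2/α} for all t ∈ [0,T]. -/
/-!
Multiplying `F'' ≤ A F^{1-α}` by `F' ≥ 0` shows that the energy `F'² - (2A/(2-α)) F^{2-α}` is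
nonincreasing, and it vanishes at `0`; hence `F' ≤ √(2A) F^{1-α/2}`. This first-order inequality
says that `F^{α/2}` grows at rate at most `(α/2) √(2A)`, which is made rigorous by working with
`(F + ε)^{α/2}` (to avoid dividing by `F = 0`) and letting `ε → 0`.
-/

open Set Filter Topology

section

variable {a b : ℝ}

theorem le_left_of_hasDerivWithinAt_nonpos {g g' : ℝ → ℝ}
    (hg : ∀ t ∈ Icc a b, HasDerivWithinAt g (g' t) (Icc a b) t)
    (hg' : ∀ t ∈ Ioo a b, g' t ≤ 0) {t : ℝ} (ht : t ∈ Icc a b) : g t ≤ g a := by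
  have hanti : AntitoneOn g (Icc a b) := by
    refine antitoneOn_of_hasDerivWithinAt_nonpos (convex_Icc a b)
      (fun x hx => (hg x hx).continuousWithinAt) ?_ (by rwa [interior_Icc])
    rw [interior_Icc]
    exact fun x hx => (hg x (Ioo_subset_Icc_self hx)).mono Ioo_subset_Icc_self
  exact hanti (left_mem_Icc.2 (ht.1.trans ht.2)) ht ht.1

theorem sq_le_of_hasDerivWithinAt_le_mul_rpow {A p : ℝ} (hp : 1 ≤ p) {F F' F'' : ℝ → ℝ}
    (hF : ∀ t ∈ Icc a b, HasDerivWithinAt F (F' t) (Icc a b) t)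
    (hF' : ∀ t ∈ Icc a b, HasDerivWithinAt F' (F'' t) (Icc a b) t)
    (hFa : F a = 0) (hF'a : F' a = 0) (hF'_nonneg : ∀ t ∈ Icc a b, 0 ≤ F' t)
    (hF''_le : ∀ t ∈ Icc a b, F'' t ≤ A * F t ^ (p - 1)) {t : ℝ} (ht : t ∈ Icc a b) :
    F' t ^ 2 ≤ 2 * A / p * F t ^ p := by
  have hp0 : p ≠ 0 := by linarith
  have henergy : ∀ s ∈ Icc a b, HasDerivWithinAt (fun s => F' s ^ 2 - 2 * A / p * F s ^ p)
      (2 * F' s * (F'' s - A * F s ^ (p - 1))) (Icc a b) s := by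
    intro s hs
    refine (((hF' s hs).fun_pow 2).fun_sub
      (((hF s hs).rpow_const (Or.inr hp)).const_mul (2 * A / p))).congr_deriv ?_
    push_cast
    field_simp
  have hdecay := le_left_of_hasDerivWithinAt_nonpos henergy (fun s hs =>
    have hs := Ioo_subset_Icc_self hs
    mul_nonpos_of_nonneg_of_nonpos (mul_nonneg zero_le_two (hF'_nonneg s hs))
      (sub_nonpos.2 (hF''_le s hs))) ht
  simp only [hFa, hF'a, Real.zero_rpow hp0] at hdecay
  linarith

theorem le_sqrt_mul_rpow_half_of_sq_le {x y K p : ℝ} (hy : 0 ≤ y)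
    (h : x ^ 2 ≤ K * y ^ p) : x ≤ √K * y ^ (p / 2) := by
  calc x ≤ √(K * y ^ p) := (le_abs_self x).trans (Real.abs_le_sqrt h)
    _ = √K * y ^ (p / 2) := by
      rw [Real.sqrt_mul' _ (Real.rpow_nonneg hy p), Real.sqrt_eq_rpow (y ^ p),
        ← Real.rpow_mul hy]
      ring_nf

theorem add_rpow_le_of_hasDerivWithinAt_le_mul_rpow {β C ε : ℝ} {F F' : ℝ → ℝ} (hβ : 0 < β)
    (hβ1 : β ≤ 1) (hC : 0 ≤ C) (hε : 0 < ε)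
    (hF : ∀ t ∈ Icc a b, HasDerivWithinAt F (F' t) (Icc a b) t)
    (hFa : F a = 0) (hF_nonneg : ∀ t ∈ Icc a b, 0 ≤ F t)
    (hF'_le : ∀ t ∈ Icc a b, F' t ≤ C * F t ^ (1 - β)) {t : ℝ} (ht : t ∈ Icc a b) :
    (F t + ε) ^ β ≤ ε ^ β + β * C * (t - a) := by
  have hpos : ∀ s ∈ Icc a b, 0 < F s + ε := fun s hs => by linarith [hF_nonneg s hs]
  have hg : ∀ s ∈ Icc a b, HasDerivWithinAt (fun s => (F s + ε) ^ β - β * C * (s - a))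
      (F' s * β * (F s + ε) ^ (β - 1) - β * C * 1) (Icc a b) s := fun s hs =>
    (((hF s hs).add_const ε).rpow_const (Or.inl (hpos s hs).ne')).fun_sub
      (((hasDerivWithinAt_id s _).sub_const a).const_mul (β * C))
  have hg' : ∀ s ∈ Ioo a b, F' s * β * (F s + ε) ^ (β - 1) - β * C * 1 ≤ 0 := by
    intro s hs
    replace hs := Ioo_subset_Icc_self hs
    have hrate : F' s * (F s + ε) ^ (β - 1) ≤ C := calc
      F' s * (F s + ε) ^ (β - 1) ≤ C * F s ^ (1 - β) * (F s + ε) ^ (β - 1) :=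
        mul_le_mul_of_nonneg_right (hF'_le s hs) (Real.rpow_nonneg (hpos s hs).le _)
      _ ≤ C * (F s + ε) ^ (1 - β) * (F s + ε) ^ (β - 1) := by
        refine mul_le_mul_of_nonneg_right (mul_le_mul_of_nonneg_left ?_ hC)
          (Real.rpow_nonneg (hpos s hs).le _)
        exact Real.rpow_le_rpow (hF_nonneg s hs) (by linarith) (by linarith)
      _ = C := by rw [mul_assoc, ← Real.rpow_add (hpos s hs)]; simp
    have := mul_le_mul_of_nonneg_left hrate hβ.le
    linarith
  have := le_left_of_hasDerivWithinAt_nonpos hg hg' ht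
  simp only [hFa, zero_add, sub_self, mul_zero, sub_zero] at this
  linarith

theorem rpow_le_mul_sub_of_hasDerivWithinAt_le_mul_rpow {β C : ℝ} {F F' : ℝ → ℝ} (hβ : 0 < β)
    (hβ1 : β ≤ 1) (hC : 0 ≤ C) (hF : ∀ t ∈ Icc a b, HasDerivWithinAt F (F' t) (Icc a b) t)
    (hFa : F a = 0) (hF_nonneg : ∀ t ∈ Icc a b, 0 ≤ F t)
    (hF'_le : ∀ t ∈ Icc a b, F' t ≤ C * F t ^ (1 - β)) {t : ℝ} (ht : t ∈ Icc a b) :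
    F t ^ β ≤ β * C * (t - a) := by
  have hlim : Tendsto (fun ε : ℝ => ε ^ β + β * C * (t - a)) (𝓝[>] 0)
      (𝓝 (β * C * (t - a))) := by
    have := tendsto_nhdsWithin_of_tendsto_nhds (s := Ioi 0)
      ((Real.continuousAt_rpow_const 0 β (Or.inr hβ.le)).tendsto.add
        (tendsto_const_nhds (x := β * C * (t - a))))
    simpa only [Real.zero_rpow hβ.ne', zero_add] using this
  refine ge_of_tendsto hlim ?_
  filter_upwards [self_mem_nhdsWithin] with ε (hε : 0 < ε)
  exact (Real.rpow_le_rpow (hF_nonneg t ht) (by linarith) hβ.le).trans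
    (add_rpow_le_of_hasDerivWithinAt_le_mul_rpow hβ hβ1 hC hε hF hFa hF_nonneg hF'_le ht)

end

theorem stmt5_general (T A α : ℝ) (hA : 0 ≤ A) (hα : 0 < α) (hα1 : α ≤ 1)
    (F F' F'' : ℝ → ℝ)
    (hder : ∀ t ∈ Set.Icc 0 T, HasDerivWithinAt F (F' t) (Set.Icc 0 T) t)
    (hder2 : ∀ t ∈ Set.Icc 0 T, HasDerivWithinAt F' (F'' t) (Set.Icc 0 T) t)
    (hF0 : F 0 = 0) (hF'0 : F' 0 = 0)
    (hFnonneg : ∀ t ∈ Set.Icc 0 T, 0 ≤ F t)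
    (hF'nonneg : ∀ t ∈ Set.Icc 0 T, 0 ≤ F' t)
    (hF'' : ∀ t ∈ Set.Icc 0 T, F'' t ≤ A * F t ^ (1 - α)) :
    ∀ t ∈ Set.Icc 0 T, F t ≤ ((α / 2) * Real.sqrt (2 * A) * t) ^ (2 / α) := by
  intro t ht
  have hp : 1 ≤ 2 - α := by linarith
  have hF'_sq : ∀ s ∈ Icc 0 T, F' s ^ 2 ≤ 2 * A * F s ^ (2 - α) := fun s hs =>
    (sq_le_of_hasDerivWithinAt_le_mul_rpow hp hder hder2 hF0 hF'0 hF'nonneg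
      (fun s hs => by rw [show 2 - α - 1 = 1 - α by ring]; exact hF'' s hs) hs).trans
      (mul_le_mul_of_nonneg_right (div_le_self (by positivity) hp)
        (Real.rpow_nonneg (hFnonneg s hs) _))
  have hF'_le : ∀ s ∈ Icc 0 T, F' s ≤ √(2 * A) * F s ^ (1 - α / 2) := fun s hs => by
    rw [show 1 - α / 2 = (2 - α) / 2 by ring]
    exact le_sqrt_mul_rpow_half_of_sq_le (hFnonneg s hs) (hF'_sq s hs)
  have hpow := rpow_le_mul_sub_of_hasDerivWithinAt_le_mul_rpow (by positivity) (by linarith)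
    (Real.sqrt_nonneg (2 * A)) hder hF0 hFnonneg hF'_le ht
  rw [sub_zero] at hpow
  rwa [← inv_div α 2, Real.le_rpow_inv_iff_of_pos (hFnonneg t ht)
    (mul_nonneg (by positivity) ht.1) (by positivity)]

/-- Second-order Gronwall estimate: if `F : [0,T] → ℝ` is twice continuously
differentiable with `F ≥ 0`, `F(0) = F'(0) = 0`, `F' ≥ 0` and `F'' ≤ A F^{1-α}` on `[0,T]`,
then `F(t) ≤ ((α/2) √(2A) t)^{2/α}` on `[0,T]`. -/
theorem stmt5 (T A α : ℝ) (hT : 0 < T) (hA : 0 ≤ A) (hα : 0 < α) (hα1 : α ≤ 1)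
    (F F' F'' : ℝ → ℝ)
    (hder : ∀ t ∈ Set.Icc 0 T, HasDerivWithinAt F (F' t) (Set.Icc 0 T) t)
    (hder2 : ∀ t ∈ Set.Icc 0 T, HasDerivWithinAt F' (F'' t) (Set.Icc 0 T) t)
    (hcont : ContinuousOn F'' (Set.Icc 0 T))
    (hF0 : F 0 = 0) (hF'0 : F' 0 = 0)
    (hFnonneg : ∀ t ∈ Set.Icc 0 T, 0 ≤ F t)
    (hF'nonneg : ∀ t ∈ Set.Icc 0 T, 0 ≤ F' t)
    (hF'' : ∀ t ∈ Set.Icc 0 T, F'' t ≤ A * F t ^ (1 - α)) :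
    ∀ t ∈ Set.Icc 0 T, F t ≤ ((α / 2) * Real.sqrt (2 * A) * t) ^ (2 / α) :=
  stmt5_general T A α hA hα hα1 F F' F'' hder hder2 hF0 hF'0 hFnonneg hF'nonneg hF''
end

section
/- Let n ∈ {2,3}, T > 0 and C > 0. Let D : [0,T] → [0,∞) be continuous and suppose that for every real p > n and every t ∈ [0,T], D(t) ≤ C p² ∫₀^t ∫₀^s D(τ)^{1−n/p} dτ ds. Then D(t) = 0 for all t ∈ [0,T]. -/
open MeasureTheory

/-!
Put `p = n q` for an integer `q ≥ 2`: then `D ≤ K q² ∫∫ D^θ` with `θ = 1 - 1/q` and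
`K = C n²` independent of `q`. Suppose `D` vanishes on `[0, a]`; the double integral may then
start at `a`. Integrating a bound `D(τ) ≤ X (τ - a)^m` twice gives
`D(t) ≤ K q² X^θ (t - a)^(θ m + 2) / ((θ m + 1)(θ m + 2))`. Starting from `D ≤ max D`, `q` such
steps give `D(t) ≤ X (t - a)^q` for some `X` when `t - a ≤ 1`, and the least such `X` satisfies `X ≤ K X^θ`,
i.e. `X ≤ K^q`. So `D(t) ≤ (K (t - a))^q` for all `q`, which forces `D(t) = 0` as long as
`K (t - a) < 1`; steps of this fixed length cover `[0, T]`.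
-/

open Set intervalIntegral Real
open scoped Interval

lemma intervalIntegrable_primitive {f : ℝ → ℝ} {a b t : ℝ} (hf : ContinuousOn f (Icc a b))
    (ht : t ∈ Icc a b) : IntervalIntegrable (fun s => ∫ τ in a..s, f τ) volume a t := by
  have hprim := continuousOn_primitive_interval (μ := volume)
    (by rw [uIcc_of_le (ht.1.trans ht.2)]; exact hf.integrableOn_Icc)
  rw [uIcc_of_le (ht.1.trans ht.2)] at hprim
  exact (hprim.mono (Icc_subset_Icc_right ht.2)).intervalIntegrable_of_Icc ht.1

lemma integral_integral_mono_on {f g : ℝ → ℝ} {a b t : ℝ} (hf : ContinuousOn f (Icc a b))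
    (hg : ContinuousOn g (Icc a b)) (hfg : ∀ x ∈ Icc a b, f x ≤ g x) (ht : t ∈ Icc a b) :
    ∫ s in a..t, ∫ τ in a..s, f τ ≤ ∫ s in a..t, ∫ τ in a..s, g τ := by
  refine integral_mono_on ht.1 (intervalIntegrable_primitive hf ht)
    (intervalIntegrable_primitive hg ht) fun s hs => ?_
  have hsb : Icc a s ⊆ Icc a b := Icc_subset_Icc_right (hs.2.trans ht.2)
  exact integral_mono_on hs.1 ((hf.mono hsb).intervalIntegrable_of_Icc hs.1)
    ((hg.mono hsb).intervalIntegrable_of_Icc hs.1) fun x hx => hfg x (hsb hx)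

lemma integral_sub_rpow (a b : ℝ) {e : ℝ} (he : -1 < e) :
    ∫ x in a..b, (x - a) ^ e = (b - a) ^ (e + 1) / (e + 1) := by
  rw [integral_comp_sub_right (fun x => x ^ e), sub_self, integral_rpow (Or.inl he),
    zero_rpow (by linarith), sub_zero]

lemma integral_integral_sub_rpow (a b : ℝ) {e : ℝ} (he : -1 < e) :
    ∫ s in a..b, ∫ τ in a..s, (τ - a) ^ e = (b - a) ^ (e + 2) / ((e + 1) * (e + 2)) := by
  simp only [integral_sub_rpow a _ he, intervalIntegral.integral_div,
    integral_sub_rpow a b (show -1 < e + 1 by linarith)]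
  rw [add_assoc, one_add_one_eq_two, div_div, mul_comm]

lemma integral_eq_of_eqOn_zero {f : ℝ → ℝ} {c a t : ℝ} (hf : IntervalIntegrable f volume c t)
    (hca : c ≤ a) (hat : a ≤ t) (h0 : EqOn f 0 (Icc c a)) :
    ∫ x in c..t, f x = ∫ x in a..t, f x := by
  have ha : a ∈ [[c, t]] := mem_uIcc_of_le hca hat
  rw [← integral_add_adjacent_intervals (hf.mono_set (uIcc_subset_uIcc_left ha))
    (hf.mono_set (uIcc_subset_uIcc_right ha)),
    integral_congr (g := fun _ => 0) (fun x hx => h0 (by rwa [uIcc_of_le hca] at hx)),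
    intervalIntegral.integral_zero, zero_add]

lemma integral_integral_eq_of_eqOn_zero {f : ℝ → ℝ} {c a b t : ℝ} (hf : ContinuousOn f (Icc c b))
    (hca : c ≤ a) (h0 : EqOn f 0 (Icc c a)) (ht : t ∈ Icc a b) :
    ∫ s in c..t, ∫ τ in c..s, f τ = ∫ s in a..t, ∫ τ in a..s, f τ := by
  have hfi : ∀ s ∈ Icc c b, IntervalIntegrable f volume c s := fun s hs =>
    (hf.mono (Icc_subset_Icc_right hs.2)).intervalIntegrable_of_Icc hs.1
  have hprim0 : ∀ s ∈ Icc c a, ∫ τ in c..s, f τ = 0 := fun s hs => by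
    rw [integral_congr (g := fun _ => 0) (fun x hx => h0 ?_), intervalIntegral.integral_zero]
    rw [uIcc_of_le hs.1] at hx
    exact ⟨hx.1, hx.2.trans hs.2⟩
  rw [integral_eq_of_eqOn_zero (intervalIntegrable_primitive hf ⟨hca.trans ht.1, ht.2⟩) hca ht.1
    hprim0]
  refine integral_congr fun s hs => ?_
  rw [uIcc_of_le ht.1] at hs
  exact integral_eq_of_eqOn_zero (hfi s ⟨hca.trans hs.1, hs.2.trans ht.2⟩) hca hs.1 h0

lemma le_mul_rpow_of_le_mul_rpow {D : ℝ → ℝ} {a b A θ X m : ℝ} (hθ : 0 ≤ θ) (hA : 0 ≤ A)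
    (hcont : ContinuousOn D (Icc a b)) (hnonneg : ∀ t ∈ Icc a b, 0 ≤ D t)
    (hD : ∀ t ∈ Icc a b, D t ≤ A * ∫ s in a..t, ∫ τ in a..s, D τ ^ θ)
    (hX : 0 ≤ X) (hm : 0 ≤ m) (hbound : ∀ τ ∈ Icc a b, D τ ≤ X * (τ - a) ^ m) :
    ∀ t ∈ Icc a b,
      D t ≤ A * X ^ θ / ((θ * m + 1) * (θ * m + 2)) * (t - a) ^ (θ * m + 2) := by
  intro t ht
  have hpow : ∀ τ ∈ Icc a b, D τ ^ θ ≤ X ^ θ * (τ - a) ^ (θ * m) := fun τ hτ => by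
    have hτa : 0 ≤ τ - a := sub_nonneg.2 hτ.1
    calc D τ ^ θ ≤ (X * (τ - a) ^ m) ^ θ := rpow_le_rpow (hnonneg τ hτ) (hbound τ hτ) hθ
      _ = X ^ θ * (τ - a) ^ (θ * m) := by
        rw [mul_rpow hX (rpow_nonneg hτa _), ← rpow_mul hτa, mul_comm m]
  have hcomp : ContinuousOn (fun τ => X ^ θ * (τ - a) ^ (θ * m)) (Icc a b) :=
    (continuous_const.mul ((continuous_id.sub continuous_const).rpow_const
      fun _ => Or.inr (mul_nonneg hθ hm))).continuousOn
  calc D t ≤ A * ∫ s in a..t, ∫ τ in a..s, D τ ^ θ := hD t ht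
    _ ≤ A * ∫ s in a..t, ∫ τ in a..s, X ^ θ * (τ - a) ^ (θ * m) :=
      mul_le_mul_of_nonneg_left (integral_integral_mono_on
        (hcont.rpow_const fun _ _ => Or.inr hθ) hcomp hpow ht) hA
    _ = A * X ^ θ / ((θ * m + 1) * (θ * m + 2)) * (t - a) ^ (θ * m + 2) := by
      simp only [intervalIntegral.integral_const_mul]
      rw [integral_integral_sub_rpow a t (by nlinarith)]
      ring

lemma le_pow_of_le_mul_rpow {S K : ℝ} {q : ℕ} (hq : 1 ≤ q) (hS : 0 ≤ S) (hK : 0 ≤ K)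
    (h : S ≤ K * S ^ (1 - (q : ℝ)⁻¹)) : S ≤ K ^ q := by
  rcases hS.eq_or_lt with rfl | hS
  · positivity
  have hsplit : S = S ^ (q : ℝ)⁻¹ * S ^ (1 - (q : ℝ)⁻¹) := by
    rw [← rpow_add hS, add_sub_cancel, rpow_one]
  have hroot : S ^ (q : ℝ)⁻¹ ≤ K := by
    refine le_of_mul_le_mul_right ?_ (rpow_pos_of_pos hS (1 - (q : ℝ)⁻¹))
    rwa [← hsplit]
  calc S = (S ^ (q : ℝ)⁻¹) ^ q := (rpow_inv_natCast_pow hS.le (by omega)).symm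
    _ ≤ K ^ q := pow_le_pow_left₀ (rpow_nonneg hS.le _) hroot q

section PowerBounds

variable {D : ℝ → ℝ} {a b K : ℝ} {q : ℕ} (hq : 1 ≤ q) (hK : 0 ≤ K)
  (hcont : ContinuousOn D (Icc a b)) (hnonneg : ∀ t ∈ Icc a b, 0 ≤ D t) (hab : b - a ≤ 1)
  (hD : ∀ t ∈ Icc a b, D t ≤ K * q ^ 2 * ∫ s in a..t, ∫ τ in a..s, D τ ^ (1 - (q : ℝ)⁻¹))
include hq hK hcont hnonneg hab hD

lemma exists_le_mul_rpow_natCast {k : ℕ} (hk : k ≤ q) :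
    ∃ X, 0 ≤ X ∧ ∀ τ ∈ Icc a b, D τ ≤ X * (τ - a) ^ (k : ℝ) := by
  induction k with
  | zero =>
    obtain ⟨M, hM⟩ := isCompact_Icc.exists_bound_of_continuousOn hcont
    refine ⟨max M 0, le_max_right _ _, fun τ hτ => ?_⟩
    rw [Nat.cast_zero, rpow_zero, mul_one]
    exact (le_abs_self _).trans ((hM τ hτ).trans (le_max_left _ _))
  | succ k ih =>
    obtain ⟨X, hX, hbound⟩ := ih (by omega)
    set θ : ℝ := 1 - (q : ℝ)⁻¹
    have hθ : 0 ≤ θ := sub_nonneg.2 (inv_le_one_of_one_le₀ (Nat.one_le_cast.2 hq))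
    have hθk : (k : ℝ) + 1 ≤ θ * k + 2 := by
      have hkq : (k : ℝ) * (q : ℝ)⁻¹ ≤ 1 := by
        rw [← div_eq_mul_inv, div_le_one (Nat.cast_pos.2 hq)]
        exact_mod_cast (by omega : k ≤ q)
      simp only [θ]
      nlinarith
    refine ⟨K * q ^ 2 * X ^ θ / ((θ * k + 1) * (θ * k + 2)), by positivity, fun τ hτ => ?_⟩
    refine (le_mul_rpow_of_le_mul_rpow hθ (by positivity) hcont hnonneg hD hX k.cast_nonneg
      hbound τ hτ).trans (mul_le_mul_of_nonneg_left ?_ (by positivity))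
    push_cast
    exact rpow_le_rpow_of_exponent_ge' (sub_nonneg.2 hτ.1) (by linarith [hτ.2]) (by positivity)
      hθk

lemma le_mul_rpow_natCast_of_le_mul_rpow_natCast {X : ℝ} (hX : 0 ≤ X)
    (hbound : ∀ τ ∈ Icc a b, D τ ≤ X * (τ - a) ^ (q : ℝ)) :
    ∀ t ∈ Icc a b, D t ≤ K * X ^ (1 - (q : ℝ)⁻¹) * (t - a) ^ (q : ℝ) := by
  intro t ht
  set θ : ℝ := 1 - (q : ℝ)⁻¹
  have hq0 : (1 : ℝ) ≤ q := Nat.one_le_cast.2 hq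
  have hθ : 0 ≤ θ := sub_nonneg.2 (inv_le_one_of_one_le₀ hq0)
  have hθq : θ * q = q - 1 := by simp only [θ]; field_simp
  have hcoef : K * q ^ 2 * X ^ θ / ((θ * q + 1) * (θ * q + 2)) ≤ K * X ^ θ := by
    rw [hθq, div_le_iff₀ (by positivity)]
    have : 0 ≤ K * X ^ θ := by positivity
    nlinarith
  refine (le_mul_rpow_of_le_mul_rpow hθ (by positivity) hcont hnonneg hD hX (by positivity)
    hbound t ht).trans (mul_le_mul hcoef ?_ (rpow_nonneg (sub_nonneg.2 ht.1) _) (by positivity))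
  exact rpow_le_rpow_of_exponent_ge' (sub_nonneg.2 ht.1) (by linarith [ht.2]) (by positivity)
    (by linarith)

lemma le_pow_mul_rpow : ∀ t ∈ Icc a b, D t ≤ K ^ q * (t - a) ^ (q : ℝ) := by
  set V := {X : ℝ | 0 ≤ X ∧ ∀ τ ∈ Icc a b, D τ ≤ X * (τ - a) ^ (q : ℝ)}
  have hVne : V.Nonempty := exists_le_mul_rpow_natCast hq hK hcont hnonneg hab hD le_rfl
  have hVbdd : BddBelow V := ⟨0, fun X hX => hX.1⟩
  have hVclosed : IsClosed V := by
    simp only [V, ofPred_and, ofPred_forall]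
    exact isClosed_Ici.inter (isClosed_iInter fun τ => isClosed_iInter fun _ =>
      isClosed_le continuous_const (continuous_id.mul continuous_const))
  obtain ⟨hS, hSbound⟩ : sInf V ∈ V := hVclosed.csInf_mem hVne hVbdd
  have hSK : sInf V ≤ K ^ q := by
    refine le_pow_of_le_mul_rpow hq hS hK (csInf_le hVbdd ⟨by positivity, ?_⟩)
    exact le_mul_rpow_natCast_of_le_mul_rpow_natCast hq hK hcont hnonneg hab hD hS hSbound
  exact fun t ht => (hSbound t ht).trans
    (mul_le_mul_of_nonneg_right hSK (rpow_nonneg (sub_nonneg.2 ht.1) _))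

end PowerBounds

lemma eq_zero_of_le_integral_integral {D : ℝ → ℝ} {a b K : ℝ} (hK : 0 ≤ K)
    (hab : b - a ≤ 1) (hKab : K * (b - a) < 1) (hcont : ContinuousOn D (Icc a b))
    (hnonneg : ∀ t ∈ Icc a b, 0 ≤ D t)
    (hD : ∀ q : ℕ, 2 ≤ q → ∀ t ∈ Icc a b,
      D t ≤ K * q ^ 2 * ∫ s in a..t, ∫ τ in a..s, D τ ^ (1 - (q : ℝ)⁻¹)) :
    ∀ t ∈ Icc a b, D t = 0 := by
  intro t ht
  have hu : 0 ≤ K * (t - a) := mul_nonneg hK (sub_nonneg.2 ht.1)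
  have hu1 : K * (t - a) < 1 := lt_of_le_of_lt (by nlinarith [ht.2]) hKab
  have hpow : ∀ᶠ q : ℕ in Filter.atTop, D t ≤ (K * (t - a)) ^ q :=
    Filter.eventually_atTop.2 ⟨2, fun q hq => by
      simpa [mul_pow, rpow_natCast] using le_pow_mul_rpow (by omega) hK hcont hnonneg hab
        (hD q hq) t ht⟩
  exact le_antisymm (ge_of_tendsto (tendsto_pow_atTop_nhds_zero_of_lt_one hu hu1) hpow)
    (hnonneg t ht)

lemma forall_mem_Icc_of_forall_step {P : ℝ → Prop} {T h : ℝ} (hh : 0 < h) (h0 : P 0)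
    (hstep : ∀ a t, 0 ≤ a → a ≤ t → t ≤ T → t - a ≤ h → (∀ s ∈ Icc 0 a, P s) → P t) :
    ∀ t ∈ Icc 0 T, P t := by
  have hk : ∀ k : ℕ, ∀ t ∈ Icc 0 T, t ≤ k * h → P t := by
    intro k
    induction k with
    | zero =>
      intro t ht htk
      rwa [le_antisymm (by simpa using htk) ht.1]
    | succ k ih =>
      intro t ht htk
      by_cases htk' : t ≤ k * h
      · exact ih t ht htk'
      refine hstep (k * h) t (by positivity) (by linarith) ht.2 (by push_cast at htk; linarith)
        fun s hs => ih s ⟨hs.1, by linarith [hs.2, ht.2]⟩ hs.2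
  intro t ht
  obtain ⟨k, hk'⟩ := exists_nat_ge (t / h)
  exact hk k t ht ((div_le_iff₀ hh).1 hk')

theorem stmt6_general (n : ℕ) (hn : n = 2 ∨ n = 3) (T C : ℝ) (hC : 0 < C)
    (D : ℝ → ℝ) (hDcont : ContinuousOn D (Set.Icc 0 T))
    (hDnonneg : ∀ t ∈ Set.Icc 0 T, 0 ≤ D t)
    (hD : ∀ p : ℝ, (n : ℝ) < p → ∀ t ∈ Set.Icc 0 T,
      D t ≤ C * p ^ 2 * ∫ s in (0:ℝ)..t, ∫ τ in (0:ℝ)..s, D τ ^ (1 - (n : ℝ) / p)) :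
    ∀ t ∈ Set.Icc 0 T, D t = 0 := by
  have hn0 : (0 : ℝ) < n := by rcases hn with rfl | rfl <;> norm_num
  have hK : 0 ≤ C * n ^ 2 := by positivity
  intro t ht
  have h0T : (0 : ℝ) ∈ Icc 0 T := ⟨le_rfl, ht.1.trans ht.2⟩
  have hc : 0 < C * n ^ 2 + 1 := by positivity
  refine forall_mem_Icc_of_forall_step (P := fun t => D t = 0) (inv_pos.2 hc)
    (le_antisymm (by simpa using hD (n + 1) (by linarith) 0 h0T) (hDnonneg 0 h0T))
    (fun a t ha hat htT hta h0 => ?_) t ht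
  have hsub : Icc a t ⊆ Icc 0 T := Icc_subset_Icc ha htT
  have hta' : (C * n ^ 2 + 1) * (t - a) ≤ 1 := (le_div_iff₀' hc).1 (by rwa [one_div])
  refine eq_zero_of_le_integral_integral hK (by nlinarith) (by nlinarith) (hDcont.mono hsub)
    (fun s hs => hDnonneg s (hsub hs)) (fun q hq s hs => ?_) t ⟨hat, le_rfl⟩
  have hθ : (0 : ℝ) < 1 - (q : ℝ)⁻¹ := sub_pos.2 (inv_lt_one_of_one_lt₀ (by exact_mod_cast hq))
  have hp := hD (n * q) (lt_mul_of_one_lt_right hn0 (by exact_mod_cast hq)) s (hsub hs)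
  rwa [div_mul_cancel_left₀ hn0.ne', integral_integral_eq_of_eqOn_zero
    (hDcont.rpow_const fun _ _ => Or.inr hθ.le) ha
    (fun x hx => by simp [h0 x hx, zero_rpow hθ.ne']) ⟨hs.1, hs.2.trans htT⟩, mul_pow,
    ← mul_assoc] at hp

/-- If `D : [0,T] → [0,∞)` is continuous and for every real `p > n`
(`n ∈ {2,3}`) satisfies `D(t) ≤ C p² ∫₀ᵗ ∫₀ˢ D(τ)^{1-n/p} dτ ds` with `C` independent of
`p`, then `D ≡ 0` on `[0,T]`. -/
theorem stmt6 (n : ℕ) (hn : n = 2 ∨ n = 3) (T C : ℝ) (hT : 0 < T) (hC : 0 < C)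
    (D : ℝ → ℝ) (hDcont : ContinuousOn D (Set.Icc 0 T))
    (hDnonneg : ∀ t ∈ Set.Icc 0 T, 0 ≤ D t)
    (hD : ∀ p : ℝ, (n : ℝ) < p → ∀ t ∈ Set.Icc 0 T,
      D t ≤ C * p ^ 2 * ∫ s in (0:ℝ)..t, ∫ τ in (0:ℝ)..s, D τ ^ (1 - (n : ℝ) / p)) :
    ∀ t ∈ Set.Icc 0 T, D t = 0 :=
  stmt6_general n hn T C hC D hDcont hDnonneg hD
end

section
/- Let n ≥ 1. There exists a constant C > 0 (depending only on n and independent of k) such that for every real k ≥ 1 and every nonnegative f ∈ L¹ ∩ L^∞(ℝⁿ×ℝⁿ) with ∫∫ |v|^k f(x,v) dx dv < ∞, the macroscopic density ρ_f(x) = ∫_{ℝⁿ} f(x,v) dv satisfies ‖ρ_f‖_{L^{(k+n)/n}(ℝⁿ)} ≤ C ‖f‖_{L^∞}^{k/(k+n)} ( ∫∫_{ℝⁿ×ℝⁿ} |v|^k f(x,v) dx dv )^{n/(k+n)}. -/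
open MeasureTheory Metric Module Real
open scoped ENNReal

/-!
For a.e. `x`, split the velocity integral of `f (x, ·)` at a radius `R`: the ball contributes at
most `‖f‖_∞ |B_1| R ^ n` and its complement at most `R ^ (-k) m(x)`, where `m(x)` is the `k`-th
velocity moment at `x`. The choice `R = (m(x) / ‖f‖_∞) ^ (1 / (k + n))` balances the two terms and
gives `ρ_f(x) ≤ (|B_1| + 1) ‖f‖_∞ ^ (k / (k + n)) m(x) ^ (n / (k + n))`. Raised to the power
`(k + n) / n`, the right-hand side is linear in `m(x)`, so integrating in `x` (Tonelli) bounds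
`‖ρ_f‖_{(k+n)/n}` by the total moment.
-/

lemma mul_rpow_optimal_radius {a b k d : ℝ} (ha : 0 < a) (hb : 0 ≤ b) (hkd : 0 < k + d) :
    a * ((b / a) ^ (1 / (k + d))) ^ d = a ^ (k / (k + d)) * b ^ (d / (k + d)) := by
  have hexp : 1 - d / (k + d) = k / (k + d) := by field_simp; ring
  rw [← rpow_mul (div_nonneg hb ha.le), div_rpow hb ha.le, one_div_mul_eq_div, ← hexp,
    rpow_sub ha, rpow_one]
  ring

lemma rpow_neg_mul_optimal_radius {a b k d : ℝ} (ha : 0 < a) (hb : 0 < b) (hkd : 0 < k + d) :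
    ((b / a) ^ (1 / (k + d))) ^ (-k) * b = a ^ (k / (k + d)) * b ^ (d / (k + d)) := by
  have hexp : 1 - k / (k + d) = d / (k + d) := by field_simp; ring
  rw [← rpow_mul (div_nonneg hb.le ha.le), div_rpow hb.le ha.le, one_div_mul_eq_div, neg_div,
    rpow_neg hb.le, rpow_neg ha.le, ← hexp, rpow_sub hb, rpow_one]
  field_simp

section Moment

variable {E : Type*} [NormedAddCommGroup E] [MeasurableSpace E] {μ : Measure E} {g : E → ℝ}
  {k M : ℝ}

theorem setIntegral_compl_ball_le_moment [OpensMeasurableSpace E] (hg0 : ∀ v, 0 ≤ g v)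
    (hk : 0 ≤ k) {R : ℝ} (hR : 0 < R) (hg : IntegrableOn g (ball 0 R)ᶜ μ)
    (hgk : Integrable (fun v ↦ ‖v‖ ^ k * g v) μ) :
    ∫ v in (ball 0 R)ᶜ, g v ∂μ ≤ R ^ (-k) * ∫ v, ‖v‖ ^ k * g v ∂μ := by
  calc ∫ v in (ball 0 R)ᶜ, g v ∂μ
      ≤ ∫ v in (ball 0 R)ᶜ, R ^ (-k) * (‖v‖ ^ k * g v) ∂μ := by
        refine setIntegral_mono_on hg (hgk.const_mul _).integrableOn measurableSet_ball.compl
          fun v hv ↦ ?_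
        have hRv : R ≤ ‖v‖ := by simpa using hv
        have hone : 1 ≤ R ^ (-k) * ‖v‖ ^ k := by
          rw [rpow_neg hR.le, inv_mul_eq_div, one_le_div (rpow_pos_of_pos hR k)]
          exact rpow_le_rpow hR.le hRv hk
        rw [← mul_assoc]
        exact le_mul_of_one_le_left (hg0 v) hone
    _ ≤ R ^ (-k) * ∫ v, ‖v‖ ^ k * g v ∂μ := by
        rw [integral_const_mul]
        refine mul_le_mul_of_nonneg_left (setIntegral_le_integral hgk (ae_of_all _ fun v ↦ ?_))
          (rpow_nonneg hR.le _)
        exact mul_nonneg (rpow_nonneg (norm_nonneg v) k) (hg0 v)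

theorem ae_eq_zero_of_integral_moment_eq_zero [NullSingletonClass μ]
    (hg0 : ∀ v, 0 ≤ g v) (hgk : Integrable (fun v ↦ ‖v‖ ^ k * g v) μ)
    (hm : ∫ v, ‖v‖ ^ k * g v ∂μ = 0) : g =ᵐ[μ] 0 := by
  have hmoment : (fun v ↦ ‖v‖ ^ k * g v) =ᵐ[μ] 0 :=
    (integral_eq_zero_iff_of_nonneg
      (fun v ↦ mul_nonneg (rpow_nonneg (norm_nonneg v) k) (hg0 v)) hgk).1 hm
  filter_upwards [hmoment, μ.ae_ne 0] with v hv hv0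
  exact (mul_eq_zero.1 hv).resolve_left (rpow_pos_of_pos (norm_pos_iff.2 hv0) k).ne'

theorem integral_le_mul_rpow_moment [NormedSpace ℝ E] [FiniteDimensional ℝ E] [BorelSpace E]
    [Nontrivial E] [μ.IsAddHaarMeasure] (hg : Integrable g μ) (hg0 : ∀ v, 0 ≤ g v)
    (hM : 0 ≤ M) (hgM : ∀ᵐ v ∂μ, g v ≤ M) (hk : 0 ≤ k)
    (hgk : Integrable (fun v ↦ ‖v‖ ^ k * g v) μ) :
    ∫ v, g v ∂μ ≤ (μ.real (ball 0 1) + 1) * M ^ (k / (k + finrank ℝ E)) *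
      (∫ v, ‖v‖ ^ k * g v ∂μ) ^ ((finrank ℝ E : ℝ) / (k + finrank ℝ E)) := by
  set d : ℝ := (finrank ℝ E : ℝ)
  set m := ∫ v, ‖v‖ ^ k * g v ∂μ
  have hkd : 0 < k + d := add_pos_of_nonneg_of_pos hk (Nat.cast_pos.2 finrank_pos)
  have hm0 : 0 ≤ m := integral_nonneg fun v ↦ mul_nonneg (rpow_nonneg (norm_nonneg v) k) (hg0 v)
  rcases hM.eq_or_lt with rfl | hM
  · rw [integral_eq_zero_of_ae (hgM.mono fun v hv ↦ le_antisymm hv (hg0 v))]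
    positivity
  rcases hm0.eq_or_lt with hm | hm
  · rw [integral_eq_zero_of_ae (ae_eq_zero_of_integral_moment_eq_zero hg0 hgk hm.symm)]
    positivity
  set R := (m / M) ^ (1 / (k + d))
  have hR : 0 < R := rpow_pos_of_pos (div_pos hm hM) _
  have hball : ∫ v in ball 0 R, g v ∂μ ≤ M * μ.real (ball 0 R) :=
    (le_abs_self _).trans <| norm_setIntegral_le_of_norm_le_const_ae measure_ball_lt_top
      (ae_restrict_of_ae (hgM.mono fun v hv ↦ by rwa [norm_of_nonneg (hg0 v)]))
  have hvol : μ.real (ball 0 R) = R ^ d * μ.real (ball 0 1) := by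
    rw [measureReal_def, μ.addHaar_ball_of_pos 0 hR, ENNReal.toReal_mul,
      ENNReal.toReal_ofReal (by positivity), rpow_natCast, measureReal_def]
  calc ∫ v, g v ∂μ = ∫ v in ball 0 R, g v ∂μ + ∫ v in (ball 0 R)ᶜ, g v ∂μ :=
        (integral_add_compl measurableSet_ball hg).symm
    _ ≤ M * μ.real (ball 0 R) + R ^ (-k) * m :=
        add_le_add hball (setIntegral_compl_ball_le_moment hg0 hk hR hg.integrableOn hgk)
    _ = μ.real (ball 0 1) * (M * R ^ d) + R ^ (-k) * m := by rw [hvol]; ring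
    _ = (μ.real (ball 0 1) + 1) * M ^ (k / (k + d)) * m ^ (d / (k + d)) := by
        rw [mul_rpow_optimal_radius hM hm.le hkd, rpow_neg_mul_optimal_radius hM hm hkd]
        ring

end Moment

theorem eLpNorm_le_mul_lintegral_rpow {α ε : Type*} [MeasurableSpace α] [ENorm ε]
    {μ : Measure α} {ρ : α → ε} {m : α → ℝ≥0∞} {A : ℝ≥0∞} {p : ℝ} (hp : 0 < p) (hA : A ≠ ∞)
    (h : ∀ᵐ x ∂μ, ‖ρ x‖ₑ ≤ A * m x ^ (1 / p)) :
    eLpNorm ρ (ENNReal.ofReal p) μ ≤ A * (∫⁻ x, m x ∂μ) ^ (1 / p) := by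
  have hpow (x : ℝ≥0∞) : (x ^ (1 / p)) ^ p = x := by
    rw [← ENNReal.rpow_mul, one_div_mul_cancel hp.ne', ENNReal.rpow_one]
  rw [eLpNorm_eq_lintegral_rpow_enorm_toReal (by simpa using hp) ENNReal.ofReal_ne_top,
    ENNReal.toReal_ofReal hp.le]
  calc (∫⁻ x, ‖ρ x‖ₑ ^ p ∂μ) ^ (1 / p)
      ≤ (∫⁻ x, A ^ p * m x ∂μ) ^ (1 / p) := by
        gcongr ?_ ^ _
        refine lintegral_mono_ae (h.mono fun x hx ↦ ?_)
        calc ‖ρ x‖ₑ ^ p ≤ (A * m x ^ (1 / p)) ^ p := by gcongr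
          _ = A ^ p * m x := by rw [ENNReal.mul_rpow_of_nonneg _ _ hp.le, hpow]
    _ = A * (∫⁻ x, m x ∂μ) ^ (1 / p) := by
        rw [lintegral_const_mul' _ _ (ENNReal.rpow_ne_top_of_nonneg hp.le hA),
          ENNReal.mul_rpow_of_nonneg _ _ (by positivity), ← ENNReal.rpow_mul,
          mul_one_div_cancel hp.ne', ENNReal.rpow_one]

theorem eLpNorm_le_ofReal_mul_integral_rpow {α : Type*} [MeasurableSpace α] {μ : Measure α}
    {ρ m : α → ℝ} {A p : ℝ} (hp : 0 < p) (hA : 0 ≤ A) (hm : Integrable m μ) (hm0 : ∀ x, 0 ≤ m x)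
    (h : ∀ᵐ x ∂μ, ‖ρ x‖ ≤ A * m x ^ (1 / p)) :
    eLpNorm ρ (ENNReal.ofReal p) μ ≤ ENNReal.ofReal (A * (∫ x, m x ∂μ) ^ (1 / p)) := by
  rw [ENNReal.ofReal_mul hA, ← ENNReal.ofReal_rpow_of_nonneg (integral_nonneg hm0) (by positivity),
    ofReal_integral_eq_lintegral_ofReal hm (ae_of_all _ hm0)]
  refine eLpNorm_le_mul_lintegral_rpow hp ENNReal.ofReal_ne_top (h.mono fun x hx ↦ ?_)
  rw [← ofReal_norm, ENNReal.ofReal_rpow_of_nonneg (hm0 x) (by positivity), ← ENNReal.ofReal_mul hA]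
  exact ENNReal.ofReal_le_ofReal hx

theorem ae_le_toReal_eLpNorm_top {α : Type*} [MeasurableSpace α] {μ : Measure α} {f : α → ℝ}
    (hf : MemLp f ∞ μ) : ∀ᵐ x ∂μ, f x ≤ (eLpNorm f ∞ μ).toReal := by
  rw [toReal_eLpNorm hf.1]
  filter_upwards [ae_le_lpNorm_exponent_top hf] with x hx
  exact (le_abs_self _).trans hx

/-- Velocity moments control the `L^p` norms of the macroscopic density:
for `n ≥ 1` there is `C > 0` (independent of `k`) such that for every real `k ≥ 1` and every
nonnegative `f ∈ L¹ ∩ L^∞(ℝⁿ×ℝⁿ)` with finite `k`-th velocity moment,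
`‖ρ_f‖_{L^{(k+n)/n}} ≤ C ‖f‖_{L^∞}^{k/(k+n)} (∫∫ |v|^k f dx dv)^{n/(k+n)}`. -/
theorem stmt7 (n : ℕ) (hn : 1 ≤ n) :
    ∃ C : ℝ, 0 < C ∧
      ∀ k : ℝ, 1 ≤ k →
        ∀ f : EuclideanSpace ℝ (Fin n) × EuclideanSpace ℝ (Fin n) → ℝ,
          (∀ z, 0 ≤ f z) →
          MemLp f 1 volume → MemLp f ⊤ volume →
          Integrable (fun z : EuclideanSpace ℝ (Fin n) × EuclideanSpace ℝ (Fin n) =>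
            ‖z.2‖ ^ k * f z) volume →
          eLpNorm (fun x : EuclideanSpace ℝ (Fin n) => ∫ v, f (x, v))
              (ENNReal.ofReal ((k + n) / n)) volume
            ≤ ENNReal.ofReal (C * (eLpNorm f ⊤ volume).toReal ^ (k / (k + n)) *
                (∫ z : EuclideanSpace ℝ (Fin n) × EuclideanSpace ℝ (Fin n),
                  ‖z.2‖ ^ k * f z) ^ ((n : ℝ) / (k + n))) := by
  have : NeZero n := ⟨by omega⟩
  refine ⟨volume.real (ball (0 : EuclideanSpace ℝ (Fin n)) 1) + 1, by positivity,
    fun k hk f hf0 hf hf_top hfk ↦ ?_⟩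
  set C := volume.real (ball (0 : EuclideanSpace ℝ (Fin n)) 1) + 1
  set M := (eLpNorm f ⊤ volume).toReal
  have hfM : ∀ᵐ z, f z ≤ M := ae_le_toReal_eLpNorm_top hf_top
  rw [Measure.volume_eq_prod] at hf hfk hfM
  have hmoment0 (x : EuclideanSpace ℝ (Fin n)) : 0 ≤ ∫ v, ‖v‖ ^ k * f (x, v) :=
    integral_nonneg fun v ↦ mul_nonneg (rpow_nonneg (norm_nonneg v) k) (hf0 _)
  have hslice : ∀ᵐ x, ∫ v, f (x, v) ≤
      C * M ^ (k / (k + n)) * (∫ v, ‖v‖ ^ k * f (x, v)) ^ ((n : ℝ) / (k + n)) := by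
    filter_upwards [(memLp_one_iff_integrable.1 hf).prod_right_ae, hfk.prod_right_ae,
      Measure.ae_ae_of_ae_prod hfM] with x hfx hfkx hfMx
    simpa only [finrank_euclideanSpace_fin] using
      integral_le_mul_rpow_moment hfx (fun v ↦ hf0 _) ENNReal.toReal_nonneg hfMx (by linarith) hfkx
  have hp : (1 : ℝ) / ((k + n) / n) = n / (k + n) := one_div_div _ _
  calc _ ≤ ENNReal.ofReal (C * M ^ (k / (k + n)) *
        (∫ x, ∫ v, ‖v‖ ^ k * f (x, v)) ^ (1 / ((k + n) / n))) := by
        refine eLpNorm_le_ofReal_mul_integral_rpow (by positivity) (by positivity)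
          hfk.integral_prod_left hmoment0 (hslice.mono fun x hx ↦ ?_)
        rwa [norm_of_nonneg (integral_nonneg fun v ↦ hf0 _), hp]
    _ = _ := by rw [← integral_prod _ hfk, ← Measure.volume_eq_prod, hp]
end

section
/- Let n ≥ 1 and define f₀ : ℝⁿ×ℝⁿ → ℝ by f₀(x,v) = 1 if |v|² ≤ (ln_-|x|)^{2/n} and f₀(x,v) = 0 otherwise. Then there exists a constant C > 0 such that for every real k ≥ 1, ∫∫_{ℝⁿ×ℝⁿ} |v|^k f₀(x,v) dx dv ≤ (C k)^{k/n}. -/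
/-!
If `v ≠ 0`, the condition `|v|² ≤ (ln₋|x|)^{2/n}` says exactly `0 < |x| ≤ exp(-|v|ⁿ)`, so
integrating out `x` bounds the moment by `ω_n ∫ |v|^k exp(-n|v|ⁿ) dv`. Split `exp(-n|v|ⁿ)` into
two halves: `r^k exp(-n rⁿ/2) ≤ (2k/n²)^{k/n}` by `log t ≤ t - 1`, and the other half
`exp(-n|v|ⁿ/2)` is integrable. The resulting constant `B` is absorbed into `(Ck)^{k/n}` because
`B ≤ max 1 B ^ k` for `k ≥ 1`.
-/

open MeasureTheory
open Real Metric Module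
open scoped ENNReal

lemma rpow_mul_exp_neg_mul_le {u p c : ℝ} (hu : 0 ≤ u) (hp : 0 < p) (hc : 0 < c) :
    u ^ p * exp (-(c * u)) ≤ (p / c) ^ p := by
  have hpc : 0 < p / c := div_pos hp hc
  have hexp : (u / (p / c)) ^ p ≤ exp (c * u) := by
    rcases hu.eq_or_lt with rfl | hu'
    · simp [zero_rpow hp.ne']
    · have ht : 0 < u / (p / c) := div_pos hu' hpc
      rw [rpow_def_of_pos ht, exp_le_exp]
      calc log (u / (p / c)) * p ≤ u / (p / c) * p := by
            gcongr; linarith [log_le_sub_one_of_pos ht]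
        _ = c * u := by field_simp
  rw [div_rpow hu hpc.le, div_le_iff₀ (rpow_pos_of_pos hpc p)] at hexp
  calc u ^ p * exp (-(c * u)) ≤ exp (c * u) * (p / c) ^ p * exp (-(c * u)) := by gcongr
    _ = (p / c) ^ p := by rw [mul_comm (exp _), mul_assoc, ← exp_add]; simp

lemma rpow_mul_exp_neg_mul_pow_le {n : ℕ} (hn : 0 < n) {r k : ℝ} (hr : 0 ≤ r) (hk : 0 < k) :
    r ^ k * exp (-(n * r ^ n)) ≤ (2 * k / n ^ 2) ^ (k / n) * exp (-(n / 2 * r ^ n)) := by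
  have hn' : (0 : ℝ) < n := Nat.cast_pos.mpr hn
  have hrk : r ^ k = (r ^ n) ^ (k / n) := by
    rw [← rpow_natCast, ← rpow_mul hr, mul_div_cancel₀ _ hn'.ne']
  have := rpow_mul_exp_neg_mul_le (pow_nonneg hr n) (div_pos hk hn') (half_pos hn')
  calc r ^ k * exp (-(n * r ^ n))
      = (r ^ n) ^ (k / n) * exp (-(n / 2 * r ^ n)) * exp (-(n / 2 * r ^ n)) := by
        rw [hrk, mul_assoc, ← exp_add]; ring_nf
    _ ≤ _ := by
        rw [show (2 * k / n ^ 2 : ℝ) = k / n / (n / 2) by field_simp]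
        gcongr

lemma mul_rpow_le_max_one_pow_mul_rpow {n : ℕ} {B a k : ℝ} (hn : 0 < n)
    (ha : 0 ≤ a) (hk : 1 ≤ k) :
    B * (a * k) ^ (k / n) ≤ (max 1 B ^ n * a * k) ^ (k / n) := by
  have hM : 1 ≤ max 1 B := le_max_left _ _
  have hBk : B ≤ (max 1 B ^ n) ^ (k / n) := by
    rw [← rpow_natCast, ← rpow_mul (by positivity), mul_div_cancel₀ _ (by positivity)]
    calc B ≤ max 1 B := le_max_right _ _
      _ = max 1 B ^ (1 : ℝ) := (rpow_one _).symm
      _ ≤ max 1 B ^ k := rpow_le_rpow_of_exponent_le hM hk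
  rw [mul_assoc, mul_rpow (x := max 1 B ^ n) (by positivity) (by positivity)]
  exact mul_le_mul_of_nonneg_right hBk (by positivity)

lemma le_exp_neg_pow_of_sq_le_rpow {n : ℕ} (hn : 0 < n) {a r : ℝ} (ha : 0 ≤ a) (hr : 0 < r)
    (h : r ^ 2 ≤ max (-log a) 0 ^ ((2 : ℝ) / n)) : a ≤ exp (-r ^ n) := by
  have hn' : (0 : ℝ) < n := Nat.cast_pos.mpr hn
  have hL : 0 ≤ max (-log a) 0 := le_max_right _ _
  have hpow : r ^ n ≤ max (-log a) 0 := by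
    have := rpow_le_rpow (by positivity) h (by positivity : (0 : ℝ) ≤ n / 2)
    rwa [← rpow_natCast r 2, ← rpow_mul hr.le, ← rpow_mul hL, Nat.cast_ofNat,
      mul_div_cancel₀ _ two_ne_zero, show (2 : ℝ) / n * (n / 2) = 1 by field_simp,
      rpow_natCast, rpow_one] at this
  have hlog : 0 < -log a := by
    simpa using (pow_pos hr n).trans_le hpow
  have ha' : 0 < a := ha.lt_of_ne (by rintro rfl; simp at hlog)
  rw [max_eq_left hlog.le] at hpow
  rw [← exp_log ha', exp_le_exp]
  linarith

lemma ofReal_rpow_norm_mul_ite_le {E : Type*} [NormedAddCommGroup E] {n : ℕ} (hn : 0 < n)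
    {k : ℝ} (hk : 0 < k) (x v : E) :
    ENNReal.ofReal (‖v‖ ^ k * if ‖v‖ ^ 2 ≤ max (-log ‖x‖) 0 ^ ((2 : ℝ) / n) then 1 else 0) ≤
      {z : E × E | ‖z.1‖ ≤ exp (-‖z.2‖ ^ n)}.indicator
        (fun z ↦ ENNReal.ofReal (‖z.2‖ ^ k)) (x, v) := by
  split_ifs with h
  · rcases (norm_nonneg v).eq_or_lt with hv | hv
    · simp [← hv, zero_rpow hk.ne']
    · rw [mul_one, Set.indicator_of_mem]
      exact le_exp_neg_pow_of_sq_le_rpow hn (norm_nonneg x) hv h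
  · simp

lemma lintegral_prod_indicator_norm_le_eq {E F : Type*} [NormedAddCommGroup E] [MeasurableSpace E]
    [OpensMeasurableSpace E] [MeasurableSpace F] (μ : Measure E) (ν : Measure F) [SFinite μ]
    [SFinite ν] {φ : F → ℝ≥0∞} {ρ : F → ℝ} (hφ : Measurable φ) (hρ : Measurable ρ) :
    ∫⁻ z, {z : E × F | ‖z.1‖ ≤ ρ z.2}.indicator (fun z ↦ φ z.2) z ∂μ.prod ν =
      ∫⁻ v, φ v * μ (closedBall 0 (ρ v)) ∂ν := by
  have hS : MeasurableSet {z : E × F | ‖z.1‖ ≤ ρ z.2} :=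
    measurableSet_le measurable_fst.norm (hρ.comp measurable_snd)
  rw [lintegral_prod_symm (f := {z : E × F | ‖z.1‖ ≤ ρ z.2}.indicator (fun z ↦ φ z.2))
    ((hφ.comp measurable_snd).indicator hS).aemeasurable]
  refine lintegral_congr fun v ↦ ?_
  rw [← lintegral_indicator_const measurableSet_closedBall]
  refine lintegral_congr fun x ↦ ?_
  by_cases hx : ‖x‖ ≤ ρ v <;> simp [hx]

lemma integrable_and_integral_le_of_lintegral_ofReal_le {α : Type*} [MeasurableSpace α]
    {μ : Measure α} {f : α → ℝ} (hfm : AEStronglyMeasurable f μ) (hf : 0 ≤ f) {c : ℝ}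
    (hc : 0 ≤ c) (h : ∫⁻ a, ENNReal.ofReal (f a) ∂μ ≤ ENNReal.ofReal c) :
    Integrable f μ ∧ ∫ a, f a ∂μ ≤ c := by
  refine ⟨(lintegral_ofReal_ne_top_iff_integrable hfm (.of_forall hf)).1
    (ne_top_of_le_ne_top ENNReal.ofReal_ne_top h), ?_⟩
  rw [integral_eq_lintegral_of_nonneg_ae (.of_forall hf) hfm]
  exact ENNReal.toReal_le_of_le_ofReal hc h

section AddHaar

variable {E : Type*} [NormedAddCommGroup E] [NormedSpace ℝ E] [FiniteDimensional ℝ E]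
  [MeasurableSpace E] [BorelSpace E] (μ : Measure E) [μ.IsAddHaarMeasure]

lemma integrable_exp_neg_mul_norm_rpow [Nontrivial E] {b p : ℝ} (hb : 0 < b) (hp : 0 < p) :
    Integrable (fun x : E ↦ exp (-b * ‖x‖ ^ p)) μ := by
  rw [integrable_fun_norm_addHaar μ (f := fun y ↦ exp (-b * y ^ p))]
  refine (integrableOn_rpow_mul_exp_neg_mul_rpow (s := (finrank ℝ E - 1 : ℕ))
    (neg_one_lt_zero.trans_le (Nat.cast_nonneg _)) hp hb).congr_fun (fun y _ ↦ ?_) measurableSet_Ioi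
  simp [rpow_natCast]

lemma lintegral_rpow_norm_indicator_le {n : ℕ} (hE : finrank ℝ E = n) (hn : 0 < n) {k : ℝ}
    (hk : 0 < k) :
    ∫⁻ z, {z : E × E | ‖z.1‖ ≤ exp (-‖z.2‖ ^ n)}.indicator
        (fun z ↦ ENNReal.ofReal (‖z.2‖ ^ k)) z ∂μ.prod μ ≤
      ENNReal.ofReal ((2 * k / n ^ 2) ^ (k / n)) *
        (μ (ball 0 1) * ∫⁻ v, ENNReal.ofReal (exp (-(n / 2 * ‖v‖ ^ n))) ∂μ) := by
  rw [lintegral_prod_indicator_norm_le_eq μ μ (φ := fun v ↦ ENNReal.ofReal (‖v‖ ^ k))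
      (ρ := fun v ↦ exp (-‖v‖ ^ n)) (by fun_prop) (by fun_prop),
    ← lintegral_const_mul' _ _ (by finiteness), ← lintegral_const_mul' _ _ ENNReal.ofReal_ne_top]
  refine lintegral_mono fun v ↦ ?_
  rw [Measure.addHaar_closedBall μ _ (exp_pos _).le, hE, ← exp_nat_mul]
  calc ENNReal.ofReal (‖v‖ ^ k) * (ENNReal.ofReal (exp (n * -‖v‖ ^ n)) * μ (ball 0 1))
      = ENNReal.ofReal (‖v‖ ^ k * exp (-(n * ‖v‖ ^ n))) * μ (ball 0 1) := by
        rw [← mul_assoc, ← ENNReal.ofReal_mul (by positivity), mul_neg]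
    _ ≤ ENNReal.ofReal ((2 * k / n ^ 2) ^ (k / n) * exp (-(n / 2 * ‖v‖ ^ n))) * μ (ball 0 1) := by
        gcongr ?_ * _
        exact ENNReal.ofReal_le_ofReal (rpow_mul_exp_neg_mul_pow_le hn (norm_nonneg v) hk)
    _ = _ := by
        rw [ENNReal.ofReal_mul (by positivity)]
        ring

lemma exists_lintegral_rpow_norm_mul_ite_le {n : ℕ} (hE : finrank ℝ E = n) (hn : 0 < n) :
    ∃ B : ℝ, 0 ≤ B ∧ ∀ k : ℝ, 0 < k →
      ∫⁻ z, ENNReal.ofReal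
          (‖z.2‖ ^ k * if ‖z.2‖ ^ 2 ≤ max (-log ‖z.1‖) 0 ^ ((2 : ℝ) / n) then 1 else 0)
          ∂μ.prod μ ≤
        ENNReal.ofReal ((2 * k / n ^ 2) ^ (k / n) * B) := by
  have : Nontrivial E := Module.nontrivial_of_finrank_pos (hE ▸ hn)
  have hint := integrable_exp_neg_mul_norm_rpow μ (b := n / 2) (p := n) (by positivity)
    (by positivity)
  simp only [rpow_natCast, neg_mul] at hint
  have hL := (lintegral_ofReal_ne_top_iff_integrable hint.aestronglyMeasurable
    (.of_forall fun _ ↦ (exp_pos _).le)).2 hint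
  refine ⟨(μ (ball 0 1) * ∫⁻ v, ENNReal.ofReal (exp (-(n / 2 * ‖v‖ ^ n))) ∂μ).toReal,
    ENNReal.toReal_nonneg, fun k hk ↦ ?_⟩
  calc _ ≤ ∫⁻ z, {z : E × E | ‖z.1‖ ≤ exp (-‖z.2‖ ^ n)}.indicator
          (fun z ↦ ENNReal.ofReal (‖z.2‖ ^ k)) z ∂μ.prod μ :=
        lintegral_mono fun z ↦ ofReal_rpow_norm_mul_ite_le hn hk z.1 z.2
    _ ≤ _ := lintegral_rpow_norm_indicator_le μ hE hn hk
    _ = _ := by rw [ENNReal.ofReal_mul (by positivity), ENNReal.ofReal_toReal (by finiteness)]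

end AddHaar

/-- For `f₀(x,v) = 1_{|v|² ≤ (ln_-|x|)^{2/n}}` there is `C > 0` such that for
every real `k ≥ 1`, `∫∫ |v|^k f₀(x,v) dx dv ≤ (C k)^{k/n}` (the moment being finite). -/
theorem stmt11 (n : ℕ) (hn : 1 ≤ n)
    (f₀ : EuclideanSpace ℝ (Fin n) × EuclideanSpace ℝ (Fin n) → ℝ)
    (hf₀ : ∀ x v : EuclideanSpace ℝ (Fin n),
      f₀ (x, v) = if ‖v‖ ^ 2 ≤ (max (-Real.log ‖x‖) 0) ^ ((2 : ℝ) / n) then 1 else 0) :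
    ∃ C : ℝ, 0 < C ∧
      ∀ k : ℝ, 1 ≤ k →
        Integrable (fun z : EuclideanSpace ℝ (Fin n) × EuclideanSpace ℝ (Fin n) =>
          ‖z.2‖ ^ k * f₀ z) volume ∧
        (∫ z : EuclideanSpace ℝ (Fin n) × EuclideanSpace ℝ (Fin n), ‖z.2‖ ^ k * f₀ z)
          ≤ (C * k) ^ (k / n) := by
  have hf₀' : ∀ z, f₀ z = if ‖z.2‖ ^ 2 ≤ max (-log ‖z.1‖) 0 ^ ((2 : ℝ) / n) then 1 else 0 :=
    fun z ↦ hf₀ z.1 z.2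
  obtain ⟨B, hB0, hB⟩ := exists_lintegral_rpow_norm_mul_ite_le volume finrank_euclideanSpace_fin hn
  refine ⟨max 1 B ^ n * (2 / n ^ 2), by positivity, fun k hk ↦ ?_⟩
  have hf₀m : Measurable f₀ := by
    rw [funext hf₀']
    exact Measurable.ite (measurableSet_le (by fun_prop) (by fun_prop)) measurable_const
      measurable_const
  have hmoment := hB k (by linarith)
  simp only [← hf₀', ← Measure.volume_eq_prod] at hmoment
  refine (integrable_and_integral_le_of_lintegral_ofReal_le (by fun_prop)
    (fun z ↦ ?_) (by positivity) hmoment).imp_right fun h ↦ h.trans ?_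
  · rw [hf₀' z]
    split_ifs <;> positivity
  · rw [mul_comm, show 2 * k / n ^ 2 = 2 / n ^ 2 * k by ring]
    exact mul_rpow_le_max_one_pow_mul_rpow hn (by positivity) hk
end

section
/- Let n ≥ 1, ξ ∈ ℝⁿ and C₀ > 0. Let ρ : ℝⁿ → [0,∞) be measurable with ρ ∈ L¹(ℝⁿ) and ρ(x) ≤ C₀ (1 + ln_-|x−ξ|) for almost every x ∈ ℝⁿ. Then sup_{p∈[1,∞)} ‖ρ‖_{L^p(ℝⁿ)}/p < +∞. -/
open MeasureTheory Metric Module ENNReal Set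

/-!
Near the singularity, `-log r ≤ r ^ (-ε) / ε` with `ε = n / (2p)` bounds `ρ ^ p` by
`(C₀ (1 + 2p)) ^ p · r ^ (-n/2)`, which is integrable on the unit ball; this gives an `L^p` bound on
the ball that is linear in `p`. Away from it `ρ ≤ C₀`, and interpolating with `ρ ∈ L¹` gives
`‖ρ‖_p ≤ C₀ ^ (1 - 1/p) ‖ρ‖₁ ^ (1/p)`, bounded uniformly in `p`.
-/

theorem ENNReal.rpow_le_max_one (a : ℝ≥0∞) {s : ℝ} (h0 : 0 ≤ s) (h1 : s ≤ 1) :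
    a ^ s ≤ max a 1 := by
  rcases le_total a 1 with ha | ha
  · exact (rpow_le_one ha h0).trans (le_max_right _ _)
  · calc a ^ s ≤ a ^ (1 : ℝ) := rpow_le_rpow_of_exponent_le ha h1
      _ = a := rpow_one a
      _ ≤ max a 1 := le_max_left _ _

theorem Real.one_add_max_neg_log_le {r ε : ℝ} (hr : 0 < r) (hr1 : r ≤ 1) (hε : 0 < ε) :
    1 + max (-Real.log r) 0 ≤ (1 + ε⁻¹) * r ^ (-ε) := by
  have hlog : -Real.log r ≤ r ^ (-ε) / ε := by
    simpa [Real.log_inv, Real.inv_rpow hr.le, Real.rpow_neg hr.le] using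
      Real.log_le_rpow_div (inv_nonneg.mpr hr.le) hε
  have hone : 1 ≤ r ^ (-ε) := Real.one_le_rpow_of_pos_of_le_one_of_nonpos hr hr1 (by linarith)
  rw [max_eq_left (neg_nonneg.mpr (Real.log_nonpos hr.le hr1))]
  calc 1 + -Real.log r ≤ r ^ (-ε) + r ^ (-ε) / ε := add_le_add hone hlog
    _ = (1 + ε⁻¹) * r ^ (-ε) := by ring

theorem Real.one_add_max_neg_log_rpow_le {r p d : ℝ} (hr : 0 < r) (hr1 : r ≤ 1) (hp : 0 < p)
    (hd : 1 ≤ d) :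
    (1 + max (-Real.log r) 0) ^ p ≤ (1 + 2 * p) ^ p * r ^ (-(d / 2)) := by
  have hε : 0 < d / (2 * p) := by positivity
  have hεinv : (d / (2 * p))⁻¹ ≤ 2 * p := by
    rw [inv_div]; exact div_le_self (by positivity) hd
  have hbase : 1 + max (-Real.log r) 0 ≤ (1 + 2 * p) * r ^ (-(d / (2 * p))) :=
    (one_add_max_neg_log_le hr hr1 hε).trans (by gcongr)
  calc (1 + max (-Real.log r) 0) ^ p ≤ ((1 + 2 * p) * r ^ (-(d / (2 * p)))) ^ p := by
        gcongr
    _ = (1 + 2 * p) ^ p * r ^ (-(d / 2)) := by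
        rw [Real.mul_rpow (by positivity) (by positivity), ← Real.rpow_mul hr.le]
        congr 2
        field_simp

theorem eLpNorm_le_rpow_mul_eLpNorm_one_rpow {α E : Type*} [MeasurableSpace α] {μ : Measure α}
    [NormedAddCommGroup E] {f : α → E} {c : ℝ≥0∞} (hc : c ≠ ∞) (hf : ∀ᵐ x ∂μ, ‖f x‖ₑ ≤ c)
    {p : ℝ} (hp : 1 ≤ p) :
    eLpNorm f (ENNReal.ofReal p) μ ≤ c ^ (1 - p⁻¹) * eLpNorm f 1 μ ^ p⁻¹ := by
  have hp0 : 0 < p := by linarith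
  have hpow : ∀ᵐ x ∂μ, ‖f x‖ₑ ^ p ≤ c ^ (p - 1) * ‖f x‖ₑ := by
    filter_upwards [hf] with x hx
    calc ‖f x‖ₑ ^ p = ‖f x‖ₑ ^ (p - 1) * ‖f x‖ₑ := by
          conv_lhs => rw [← sub_add_cancel p 1]
          rw [rpow_add_of_nonneg _ _ (by linarith) zero_le_one, rpow_one]
      _ ≤ c ^ (p - 1) * ‖f x‖ₑ := by gcongr
  rw [eLpNorm_eq_lintegral_rpow_enorm_toReal (by simpa using hp0) ofReal_ne_top,
    toReal_ofReal hp0.le, eLpNorm_one_eq_lintegral_enorm]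
  calc (∫⁻ x, ‖f x‖ₑ ^ p ∂μ) ^ (1 / p) ≤ (∫⁻ x, c ^ (p - 1) * ‖f x‖ₑ ∂μ) ^ (1 / p) := by
        gcongr ?_ ^ _
        exact lintegral_mono_ae hpow
    _ = c ^ (1 - p⁻¹) * (∫⁻ x, ‖f x‖ₑ ∂μ) ^ p⁻¹ := by
        rw [lintegral_const_mul' _ _ (rpow_ne_top_of_nonneg (by linarith) hc),
          mul_rpow_of_nonneg _ _ (by positivity), ← rpow_mul, one_div]
        congr 2
        field_simp

theorem eLpNorm_indicator_compl_ball_le_of_enorm_le_log {E F : Type*} [NormedAddCommGroup E]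
    [MeasurableSpace E] [NormedAddCommGroup F] {μ : Measure E} {f : E → F} {c : ℝ≥0∞}
    (hc : c ≠ ∞) (hf : ∀ᵐ x ∂μ, ‖f x‖ₑ ≤ c * ENNReal.ofReal (1 + max (-Real.log ‖x‖) 0))
    {p : ℝ} (hp : 1 ≤ p) :
    eLpNorm ((ball (0 : E) 1)ᶜ.indicator f) (ENNReal.ofReal p) μ ≤
      c ^ (1 - p⁻¹) * eLpNorm f 1 μ ^ p⁻¹ := by
  have hbounded : ∀ᵐ x ∂μ, ‖(ball (0 : E) 1)ᶜ.indicator f x‖ₑ ≤ c := by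
    filter_upwards [hf] with x hx
    by_cases hx1 : x ∈ ball (0 : E) 1
    · simp [hx1]
    · have hlog : max (-Real.log ‖x‖) 0 = 0 :=
        max_eq_right (neg_nonpos.mpr (Real.log_nonneg (by simpa using hx1)))
      simpa [hx1, hlog] using hx
  calc eLpNorm ((ball (0 : E) 1)ᶜ.indicator f) (ENNReal.ofReal p) μ
      ≤ c ^ (1 - p⁻¹) * eLpNorm ((ball (0 : E) 1)ᶜ.indicator f) 1 μ ^ p⁻¹ :=
        eLpNorm_le_rpow_mul_eLpNorm_one_rpow hc hbounded hp
    _ ≤ c ^ (1 - p⁻¹) * eLpNorm f 1 μ ^ p⁻¹ := by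
        gcongr
        exact eLpNorm_indicator_le f

section AddHaar

variable {E F : Type*} [NormedAddCommGroup E] [NormedSpace ℝ E] [FiniteDimensional ℝ E]
  [MeasurableSpace E] [BorelSpace E] [NormedAddCommGroup F] {μ : Measure E} [μ.IsAddHaarMeasure]

theorem lintegral_ball_norm_rpow_neg_lt_top (hd : 1 ≤ finrank ℝ E) {α : ℝ}
    (hα : α < finrank ℝ E) (r : ℝ) :
    ∫⁻ x in ball 0 r, ENNReal.ofReal (‖x‖ ^ (-α)) ∂μ < ∞ :=
  Integrable.lintegral_lt_top <| integrableOn_ball_of_norm_le_rpow (C := 1) hd hα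
    (ae_of_all _ fun x => by simp [abs_of_nonneg (Real.rpow_nonneg (norm_nonneg x) _)])
    (continuous_norm.measurable.pow_const _).aestronglyMeasurable

theorem eLpNorm_indicator_ball_le_of_enorm_le_log (hd : 1 ≤ finrank ℝ E) {f : E → F}
    {c : ℝ≥0∞} (hf : ∀ᵐ x ∂μ, ‖f x‖ₑ ≤ c * ENNReal.ofReal (1 + max (-Real.log ‖x‖) 0))
    {p : ℝ} (hp : 1 ≤ p) :
    eLpNorm ((ball (0 : E) 1).indicator f) (ENNReal.ofReal p) μ ≤
      c * ENNReal.ofReal (1 + 2 * p) *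
        (∫⁻ x in ball 0 1, ENNReal.ofReal (‖x‖ ^ (-(finrank ℝ E / 2 : ℝ))) ∂μ) ^ p⁻¹ := by
  have : Nontrivial E := Module.nontrivial_of_finrank_pos (R := ℝ) (by omega)
  have hp0 : 0 < p := by linarith
  set K := c * ENNReal.ofReal (1 + 2 * p)
  have hpow : ∀ᵐ x ∂μ.restrict (ball 0 1),
      ‖f x‖ₑ ^ p ≤ K ^ p * ENNReal.ofReal (‖x‖ ^ (-(finrank ℝ E / 2 : ℝ))) := by
    have hne : ∀ᵐ x ∂μ, x ∉ ({0} : Set E) := measure_eq_zero_iff_ae_notMem.mp (measure_singleton 0)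
    filter_upwards [ae_restrict_mem measurableSet_ball, ae_restrict_of_ae hf,
      ae_restrict_of_ae hne] with x hx1 hfx hx0
    have hr : 0 < ‖x‖ := norm_pos_iff.mpr hx0
    have hr1 : ‖x‖ ≤ 1 := (mem_ball_zero_iff.mp hx1).le
    calc ‖f x‖ₑ ^ p ≤ c ^ p * ENNReal.ofReal ((1 + max (-Real.log ‖x‖) 0) ^ p) := by
          rw [← ofReal_rpow_of_nonneg (by positivity) hp0.le, ← mul_rpow_of_nonneg _ _ hp0.le]
          gcongr
      _ ≤ c ^ p * ENNReal.ofReal ((1 + 2 * p) ^ p * ‖x‖ ^ (-(finrank ℝ E / 2 : ℝ))) := by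
          gcongr
          exact Real.one_add_max_neg_log_rpow_le hr hr1 hp0 (by exact_mod_cast hd)
      _ = K ^ p * ENNReal.ofReal (‖x‖ ^ (-(finrank ℝ E / 2 : ℝ))) := by
          rw [ofReal_mul (by positivity), ← ofReal_rpow_of_nonneg (by positivity) hp0.le,
            mul_rpow_of_nonneg _ _ hp0.le, mul_assoc]
  rw [eLpNorm_indicator_eq_eLpNorm_restrict measurableSet_ball,
    eLpNorm_eq_lintegral_rpow_enorm_toReal (by simpa using hp0) ofReal_ne_top,
    toReal_ofReal hp0.le]
  calc (∫⁻ x in ball 0 1, ‖f x‖ₑ ^ p ∂μ) ^ (1 / p)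
      ≤ (∫⁻ x in ball 0 1, K ^ p * ENNReal.ofReal (‖x‖ ^ (-(finrank ℝ E / 2 : ℝ))) ∂μ)
          ^ (1 / p) := by
        gcongr ?_ ^ _
        exact lintegral_mono_ae hpow
    _ = K * (∫⁻ x in ball 0 1, ENNReal.ofReal (‖x‖ ^ (-(finrank ℝ E / 2 : ℝ))) ∂μ) ^ p⁻¹ := by
        rw [lintegral_const_mul _ (by fun_prop),
          mul_rpow_of_nonneg _ _ (by positivity), ← rpow_mul, one_div, mul_inv_cancel₀ hp0.ne',
          rpow_one]

theorem exists_eLpNorm_le_mul_of_norm_le_log (hd : 1 ≤ finrank ℝ E) {f : E → F}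
    (hf : Integrable f μ) {C₀ : ℝ}
    (hbound : ∀ᵐ x ∂μ, ‖f x‖ ≤ C₀ * (1 + max (-Real.log ‖x‖) 0)) :
    ∃ C : ℝ, ∀ p : ℝ, 1 ≤ p → eLpNorm f (ENNReal.ofReal p) μ ≤ ENNReal.ofReal (C * p) := by
  set c := ENNReal.ofReal C₀
  set M := ∫⁻ x in ball 0 1, ENNReal.ofReal (‖x‖ ^ (-(finrank ℝ E / 2 : ℝ))) ∂μ
  have hM : M < ∞ := lintegral_ball_norm_rpow_neg_lt_top hd
    (by linarith [show (1 : ℝ) ≤ finrank ℝ E by exact_mod_cast hd]) 1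
  have hI : eLpNorm f 1 μ < ∞ := (memLp_one_iff_integrable.mpr hf).2
  have hbound' : ∀ᵐ x ∂μ, ‖f x‖ₑ ≤ c * ENNReal.ofReal (1 + max (-Real.log ‖x‖) 0) := by
    filter_upwards [hbound] with x hx
    rw [← ofReal_mul' (by positivity), ← ofReal_norm]
    exact ofReal_le_ofReal hx
  set A := c * max M 1
  set B := max c 1 * max (eLpNorm f 1 μ) 1
  refine ⟨(3 * A + B).toReal, fun p hp => ?_⟩
  have hp0 : 0 ≤ p⁻¹ := by positivity
  have hp1 : p⁻¹ ≤ 1 := inv_le_one_of_one_le₀ hp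
  calc eLpNorm f (ENNReal.ofReal p) μ
      = eLpNorm ((ball 0 1).indicator f + (ball 0 1)ᶜ.indicator f) (ENNReal.ofReal p) μ := by
        rw [indicator_self_add_compl]
    _ ≤ eLpNorm ((ball 0 1).indicator f) (ENNReal.ofReal p) μ
        + eLpNorm ((ball 0 1)ᶜ.indicator f) (ENNReal.ofReal p) μ :=
        eLpNorm_add_le (hf.1.indicator measurableSet_ball)
          (hf.1.indicator measurableSet_ball.compl) (by simpa using hp)
    _ ≤ c * ENNReal.ofReal (1 + 2 * p) * M ^ p⁻¹ + c ^ (1 - p⁻¹) * eLpNorm f 1 μ ^ p⁻¹ :=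
        add_le_add (eLpNorm_indicator_ball_le_of_enorm_le_log hd hbound' hp)
          (eLpNorm_indicator_compl_ball_le_of_enorm_le_log ofReal_ne_top hbound' hp)
    _ ≤ c * ENNReal.ofReal (1 + 2 * p) * max M 1 + max c 1 * max (eLpNorm f 1 μ) 1 := by
        gcongr
        · exact rpow_le_max_one M hp0 hp1
        · exact rpow_le_max_one c (by linarith) (by linarith)
        · exact rpow_le_max_one _ hp0 hp1
    _ = ENNReal.ofReal (1 + 2 * p) * A + 1 * B := by ring
    _ ≤ 3 * ENNReal.ofReal p * A + ENNReal.ofReal p * B := by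
        have h3 : ENNReal.ofReal (1 + 2 * p) ≤ 3 * ENNReal.ofReal p := by
          rw [← ofReal_ofNat 3, ← ofReal_mul (by norm_num)]
          exact ofReal_le_ofReal (by linarith)
        gcongr
        exact one_le_ofReal.mpr hp
    _ = ENNReal.ofReal ((3 * A + B).toReal * p) := by
        rw [ofReal_mul toReal_nonneg, ofReal_toReal (by finiteness)]
        ring

end AddHaar

theorem stmt14_general (n : ℕ) (hn : 1 ≤ n) (ξ : EuclideanSpace ℝ (Fin n)) (C₀ : ℝ)
    (ρ : EuclideanSpace ℝ (Fin n) → ℝ) (hnonneg : ∀ x, 0 ≤ ρ x)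
    (hL1 : Integrable ρ volume)
    (hbound : ∀ᵐ x : EuclideanSpace ℝ (Fin n) ∂volume,
      ρ x ≤ C₀ * (1 + max (-Real.log ‖x - ξ‖) 0)) :
    ∃ C : ℝ, ∀ p : ℝ, 1 ≤ p →
      eLpNorm ρ (ENNReal.ofReal p) volume ≤ ENNReal.ofReal (C * p) := by
  have htrans := measurePreserving_add_right (volume : Measure (EuclideanSpace ℝ (Fin n))) ξ
  obtain ⟨C, hC⟩ := exists_eLpNorm_le_mul_of_norm_le_log (μ := volume)
    (by rwa [finrank_euclideanSpace_fin]) (hL1.comp_add_right ξ) <| by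
      filter_upwards [htrans.quasiMeasurePreserving.ae hbound] with x hx
      simpa [Real.norm_of_nonneg (hnonneg _)] using hx
  refine ⟨C, fun p hp => ?_⟩
  rw [← eLpNorm_comp_measurePreserving hL1.1 htrans]
  exact hC p hp

/-- A nonnegative integrable density with at most a logarithmic singularity at
one point `ξ`, i.e. `ρ(x) ≤ C₀ (1 + ln_-|x-ξ|)` a.e., satisfies the linear-in-`p` growth
condition `sup_{p ≥ 1} ‖ρ‖_{L^p}/p < ∞`. -/
theorem stmt14 (n : ℕ) (hn : 1 ≤ n) (ξ : EuclideanSpace ℝ (Fin n)) (C₀ : ℝ) (hC₀ : 0 < C₀)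
    (ρ : EuclideanSpace ℝ (Fin n) → ℝ) (hmeas : Measurable ρ) (hnonneg : ∀ x, 0 ≤ ρ x)
    (hL1 : Integrable ρ volume)
    (hbound : ∀ᵐ x : EuclideanSpace ℝ (Fin n) ∂volume,
      ρ x ≤ C₀ * (1 + max (-Real.log ‖x - ξ‖) 0)) :
    ∃ C : ℝ, ∀ p : ℝ, 1 ≤ p →
      eLpNorm ρ (ENNReal.ofReal p) volume ≤ ENNReal.ofReal (C * p) :=
  stmt14_general n hn ξ C₀ ρ hnonneg hL1 hbound
end

section
/- Let n ∈ {2,3}, T > 0, and let E : [0,T]×ℝⁿ → ℝⁿ be bounded and jointly measurable. Suppose there exists C₀ > 0 such that for every real p > n, every t ∈ [0,T] and all x, y ∈ ℝⁿ, |E(t,x) − E(t,y)| ≤ C₀ p² |x−y|^{1−n/p}. Let (x₀,v₀) ∈ ℝⁿ×ℝⁿ and let γ₁, γ₂ : [0,T] → ℝⁿ be continuous functions satisfying γᵢ(t) = x₀ + t v₀ + ∫₀^t ∫₀^s E(τ, γᵢ(τ)) dτ ds for all t ∈ [0,T] (i = 1,2). Then γ₁(t) = γ₂(t) for all t ∈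 [0,T]. -/
/-!
Put `η = γ₁ - γ₂` and `Δ τ = E τ (γ₁ τ) - E τ (γ₂ τ)`, so that `η t = ∫₀ᵗ ∫₀ˢ Δ`. Choosing
`p = n log (1 / ‖η‖)` in the Hölder bounds gives `‖Δ‖ ≤ C Y² e^{-Y}` wherever `‖η‖ ≤ e^{-Y}` and
`Y ≥ 2`, with `C = e C₀ n²`. The barrier `w s = exp (-Y s)`, `Y s = L e^{-μ s}`, `μ = C + 1`, has
`w'' = μ² Y (Y - 1) w ≥ C Y² e^{-Y}`, so integrating twice up to the first time `‖η‖` reaches `w`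
shows that it never does. Letting `L → ∞` forces `η = 0`.
-/

open MeasureTheory Set Real Filter Topology

theorem sq_mul_exp_neg_le_of_two_le {y z : ℝ} (hy : 2 ≤ y) (hyz : y ≤ z) :
    z ^ 2 * exp (-z) ≤ y ^ 2 * exp (-y) := by
  have hz : z ≤ y * exp ((z - y) / 2) := by
    nlinarith [add_one_le_exp ((z - y) / 2)]
  calc z ^ 2 * exp (-z) ≤ (y * exp ((z - y) / 2)) ^ 2 * exp (-z) := by
        gcongr; linarith
    _ = y ^ 2 * exp (-y) := by
        rw [mul_pow, ← exp_nat_mul, mul_assoc, ← exp_add]; ring_nf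

/-- Optimising the exponent `p = d log (1/u)` in a family of bounds `C p² u^(1 - d/p)`. -/
theorem le_of_forall_mul_sq_mul_rpow_le {a C d u y : ℝ} (hd : 0 < d) (hC : 0 ≤ C) (hy : 2 ≤ y)
    (hu : 0 ≤ u) (huy : u ≤ exp (-y)) (h : ∀ p, d < p → a ≤ C * p ^ 2 * u ^ (1 - d / p)) :
    a ≤ exp 1 * C * d ^ 2 * (y ^ 2 * exp (-y)) := by
  rcases hu.eq_or_lt with rfl | hu_pos
  · have h2d := h (2 * d) (by linarith)
    rw [zero_rpow (by field_simp; norm_num), mul_zero] at h2d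
    exact h2d.trans (by positivity)
  set q := -log u
  have hyq : y ≤ q := by
    have := log_le_log hu_pos huy
    rw [log_exp] at this
    linarith
  have hrpow : u ^ (1 - d / (d * q)) = exp 1 * exp (-q) := by
    rw [rpow_def_of_pos hu_pos, ← exp_add, show log u = -q by ring]
    have hq : q ≠ 0 := by linarith
    congr 1
    field_simp
    ring
  calc a ≤ C * (d * q) ^ 2 * u ^ (1 - d / (d * q)) := h _ (by nlinarith)
    _ = exp 1 * C * d ^ 2 * (q ^ 2 * exp (-q)) := by rw [hrpow]; ring
    _ ≤ exp 1 * C * d ^ 2 * (y ^ 2 * exp (-y)) := by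
        have := sq_mul_exp_neg_le_of_two_le hy hyq
        gcongr

theorem forall_lt_of_forall_Ico_lt {f g : ℝ → ℝ} {a b : ℝ} (hf : ContinuousOn f (Icc a b))
    (hg : ContinuousOn g (Icc a b))
    (step : ∀ t ∈ Icc a b, (∀ s ∈ Ico a t, f s < g s) → f t < g t) :
    ∀ t ∈ Icc a b, f t < g t := by
  by_contra! hbad
  set S := {t ∈ Icc a b | g t ≤ f t}
  have hS : IsClosed S := isClosed_Icc.isClosed_le hg hf
  have hSne : S.Nonempty := hbad
  have hSbdd : BddBelow S := ⟨a, fun t ht => ht.1.1⟩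
  have hcS : sInf S ∈ S := hS.csInf_mem hSne hSbdd
  refine (step _ hcS.1 fun s hs => ?_).not_ge hcS.2
  by_contra! hs'
  exact (csInf_le hSbdd ⟨⟨hs.1, hs.2.le.trans hcS.1.2⟩, hs'⟩).not_gt hs.2

section Comparison

variable {F : Type*} [NormedAddCommGroup F] [NormedSpace ℝ F] {η Δ : ℝ → F} {w w' w'' : ℝ → ℝ}

theorem norm_lt_of_eq_integral_integral_of_lt_on_Ico {t : ℝ} (ht : 0 ≤ t)
    (hη : η t = ∫ s in 0..t, ∫ τ in 0..s, Δ τ)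
    (hw : ∀ s, HasDerivAt w (w' s) s) (hw' : ∀ s, HasDerivAt w' (w'' s) s)
    (hw''c : Continuous w'') (hw0 : 0 < w 0) (hw'0 : 0 ≤ w' 0)
    (hΔ : ∀ s ∈ Ico 0 t, ‖η s‖ ≤ w s → ‖Δ s‖ ≤ w'' s) (hlt : ∀ s ∈ Ico 0 t, ‖η s‖ < w s) :
    ‖η t‖ < w t := by
  have hw'c : Continuous w' := continuous_iff_continuousAt.2 fun s => (hw' s).continuousAt
  have hprim : ∀ s ∈ Ioc 0 t, ‖∫ τ in 0..s, Δ τ‖ ≤ w' s := fun s hs => calc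
    ‖∫ τ in 0..s, Δ τ‖ ≤ ∫ τ in 0..s, w'' τ := by
        refine intervalIntegral.norm_integral_le_of_norm_le hs.1.le ?_
          (hw''c.intervalIntegrable _ _)
        filter_upwards [Measure.ae_ne volume t] with τ hτt hτ
        have hτ' : τ ∈ Ico 0 t := ⟨hτ.1.le, (hτ.2.trans hs.2).lt_of_ne hτt⟩
        exact hΔ τ hτ' (hlt τ hτ').le
    _ = w' s - w' 0 := intervalIntegral.integral_eq_sub_of_hasDerivAt (fun τ _ => hw' τ)
        (hw''c.intervalIntegrable _ _)
    _ ≤ w' s := by linarith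
  calc ‖η t‖ ≤ ∫ s in 0..t, w' s := by
        rw [hη]
        exact intervalIntegral.norm_integral_le_of_norm_le ht (ae_of_all _ hprim)
          (hw'c.intervalIntegrable _ _)
    _ = w t - w 0 := intervalIntegral.integral_eq_sub_of_hasDerivAt (fun s _ => hw s)
        (hw'c.intervalIntegrable _ _)
    _ < w t := by linarith

theorem norm_lt_of_eq_integral_integral {T : ℝ} (hηc : ContinuousOn η (Icc 0 T))
    (hη : ∀ t ∈ Icc 0 T, η t = ∫ s in 0..t, ∫ τ in 0..s, Δ τ)
    (hw : ∀ s, HasDerivAt w (w' s) s) (hw' : ∀ s, HasDerivAt w' (w'' s) s)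
    (hw''c : Continuous w'') (hw0 : 0 < w 0) (hw'0 : 0 ≤ w' 0)
    (hΔ : ∀ s ∈ Icc 0 T, ‖η s‖ ≤ w s → ‖Δ s‖ ≤ w'' s) :
    ∀ t ∈ Icc 0 T, ‖η t‖ < w t := by
  have hwc : Continuous w := continuous_iff_continuousAt.2 fun s => (hw s).continuousAt
  refine forall_lt_of_forall_Ico_lt hηc.norm hwc.continuousOn fun t ht hlt => ?_
  have hsub : Ico 0 t ⊆ Icc 0 T := Ico_subset_Icc_self.trans (Icc_subset_Icc_right ht.2)
  exact norm_lt_of_eq_integral_integral_of_lt_on_Ico ht.1 (hη t ht) hw hw' hw''c hw0 hw'0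
    (fun s hs => hΔ s (hsub hs)) hlt

end Comparison

theorem integral_integral_sub {F : Type*} [NormedAddCommGroup F] [NormedSpace ℝ F]
    {f g : ℝ → F} {a b : ℝ}
    (hf : IntegrableOn f (uIcc a b)) (hg : IntegrableOn g (uIcc a b)) :
    ∫ s in a..b, ∫ τ in a..s, (f τ - g τ) =
      (∫ s in a..b, ∫ τ in a..s, f τ) - ∫ s in a..b, ∫ τ in a..s, g τ := by
  have hsub : ∀ s ∈ uIcc a b, uIcc a s ⊆ uIcc a b := fun s hs => uIcc_subset_uIcc left_mem_uIcc hs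
  rw [← intervalIntegral.integral_sub
    (intervalIntegral.continuousOn_primitive_interval hf).intervalIntegrable
    (intervalIntegral.continuousOn_primitive_interval hg).intervalIntegrable]
  refine intervalIntegral.integral_congr fun s hs => ?_
  exact intervalIntegral.integral_sub ((hf.mono_set (hsub s hs)).intervalIntegrable)
    ((hg.mono_set (hsub s hs)).intervalIntegrable)

theorem integrableOn_comp_of_bounded {X F : Type*} [TopologicalSpace X] [MeasurableSpace X]
    [BorelSpace X] [NormedAddCommGroup F] [MeasurableSpace F] [BorelSpace F]
    [SecondCountableTopology F] {E : ℝ → X → F} {γ : ℝ → X} {a b K : ℝ}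
    (hE : Measurable (Function.uncurry E)) (hK : ∀ t x, ‖E t x‖ ≤ K)
    (hγ : ContinuousOn γ (Icc a b)) : IntegrableOn (fun τ => E τ (γ τ)) (Icc a b) := by
  have hm : AEMeasurable (fun τ => E τ (γ τ)) (volume.restrict (Icc a b)) :=
    hE.comp_aemeasurable (aemeasurable_id.prodMk (hγ.aemeasurable measurableSet_Icc))
  exact Integrable.mono' (integrableOn_const measure_Icc_lt_top.ne) hm.aestronglyMeasurable
    (ae_of_all _ fun τ => hK τ _)

section Barrier

noncomputable def barrierExponent (μ L s : ℝ) : ℝ := L * exp (-(μ * s))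

noncomputable def barrier (μ L s : ℝ) : ℝ := exp (-barrierExponent μ L s)

variable (μ L s : ℝ)

theorem hasDerivAt_barrierExponent :
    HasDerivAt (barrierExponent μ L) (-(μ * barrierExponent μ L s)) s := by
  have := (((hasDerivAt_id s).const_mul μ).neg.exp).const_mul L
  exact this.congr_deriv (by simp only [barrierExponent, Pi.neg_apply, id]; ring)

theorem hasDerivAt_barrier :
    HasDerivAt (barrier μ L) (μ * barrierExponent μ L s * barrier μ L s) s :=
  (hasDerivAt_barrierExponent μ L s).neg.exp.congr_deriv
    (by simp only [barrier, Pi.neg_apply]; ring)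

theorem hasDerivAt_mul_barrierExponent_mul_barrier :
    HasDerivAt (fun s => μ * barrierExponent μ L s * barrier μ L s)
      (μ ^ 2 * barrierExponent μ L s * (barrierExponent μ L s - 1) * barrier μ L s) s :=
  (((hasDerivAt_barrierExponent μ L s).const_mul μ).mul (hasDerivAt_barrier μ L s)).congr_deriv
    (by ring)

theorem continuous_barrier : Continuous (barrier μ L) := by
  unfold barrier barrierExponent; fun_prop

theorem continuous_barrierExponent : Continuous (barrierExponent μ L) := by
  unfold barrierExponent; fun_prop

variable {μ L s}

theorem barrierExponent_pos (hL : 0 < L) : 0 < barrierExponent μ L s := mul_pos hL (exp_pos _)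

theorem two_le_barrierExponent {T : ℝ} (hμ : 0 ≤ μ) (hL : 2 * exp (μ * T) ≤ L) (hs : s ≤ T) :
    2 ≤ barrierExponent μ L s :=
  calc (2 : ℝ) = 2 * exp (μ * T) * exp (-(μ * T)) := by rw [mul_assoc, ← exp_add]; simp
    _ ≤ L * exp (-(μ * s)) := by
        have : 0 ≤ L := le_trans (by positivity) hL
        gcongr
    _ = barrierExponent μ L s := rfl

theorem mul_sq_mul_exp_neg_le_barrier {C : ℝ} (hY : 2 ≤ barrierExponent (C + 1) L s) :
    C * (barrierExponent (C + 1) L s ^ 2 * exp (-barrierExponent (C + 1) L s)) ≤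
      (C + 1) ^ 2 * barrierExponent (C + 1) L s * (barrierExponent (C + 1) L s - 1) *
        barrier (C + 1) L s := by
  have hW : 0 < barrier (C + 1) L s := exp_pos _
  rw [barrier] at *
  set Y := barrierExponent (C + 1) L s
  have : C * Y ^ 2 ≤ (C + 1) ^ 2 * Y * (Y - 1) := by
    nlinarith [mul_nonneg (sq_nonneg (C + 1)) (mul_nonneg (by linarith : (0 : ℝ) ≤ Y)
      (by linarith : (0 : ℝ) ≤ Y - 2)), sq_nonneg (C * Y), sq_nonneg Y]
  rw [← mul_assoc]
  exact mul_le_mul_of_nonneg_right this hW.le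

theorem tendsto_barrier_atTop : Tendsto (fun L => barrier μ L s) atTop (𝓝 0) :=
  tendsto_exp_atBot.comp <| tendsto_neg_atTop_atBot.comp <|
    tendsto_id.atTop_mul_const (exp_pos _)

end Barrier

theorem stmt17_general (n : ℕ) (hn : n = 2 ∨ n = 3) (T : ℝ)
    (E : ℝ → EuclideanSpace ℝ (Fin n) → EuclideanSpace ℝ (Fin n))
    (hEbdd : ∃ K : ℝ, ∀ t x, ‖E t x‖ ≤ K)
    (hEmeas : Measurable (Function.uncurry E))
    (C₀ : ℝ) (hC₀ : 0 < C₀)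
    (hEhold : ∀ p : ℝ, (n : ℝ) < p → ∀ t ∈ Set.Icc 0 T,
      ∀ x y : EuclideanSpace ℝ (Fin n),
        ‖E t x - E t y‖ ≤ C₀ * p ^ 2 * ‖x - y‖ ^ (1 - (n : ℝ) / p))
    (x₀ v₀ : EuclideanSpace ℝ (Fin n))
    (γ₁ γ₂ : ℝ → EuclideanSpace ℝ (Fin n))
    (hγ₁cont : ContinuousOn γ₁ (Set.Icc 0 T)) (hγ₂cont : ContinuousOn γ₂ (Set.Icc 0 T))
    (hγ₁ : ∀ t ∈ Set.Icc 0 T,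
      γ₁ t = x₀ + t • v₀ + ∫ s in (0:ℝ)..t, ∫ τ in (0:ℝ)..s, E τ (γ₁ τ))
    (hγ₂ : ∀ t ∈ Set.Icc 0 T,
      γ₂ t = x₀ + t • v₀ + ∫ s in (0:ℝ)..t, ∫ τ in (0:ℝ)..s, E τ (γ₂ τ)) :
    ∀ t ∈ Set.Icc 0 T, γ₁ t = γ₂ t := by
  obtain ⟨K, hK⟩ := hEbdd
  have hn0 : (0 : ℝ) < n := by rcases hn with rfl | rfl <;> norm_num
  have hη : ∀ t ∈ Icc 0 T,
      γ₁ t - γ₂ t = ∫ s in 0..t, ∫ τ in 0..s, (E τ (γ₁ τ) - E τ (γ₂ τ)) := by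
    intro t ht
    have hsub : uIcc 0 t ⊆ Icc 0 T := uIcc_subset_Icc ⟨le_rfl, ht.1.trans ht.2⟩ ht
    rw [integral_integral_sub
      ((integrableOn_comp_of_bounded hEmeas hK hγ₁cont).mono_set hsub)
      ((integrableOn_comp_of_bounded hEmeas hK hγ₂cont).mono_set hsub), hγ₁ t ht, hγ₂ t ht]
    abel
  set C := exp 1 * C₀ * n ^ 2
  have hbarrier : ∀ L, 2 * exp ((C + 1) * T) ≤ L → ∀ t ∈ Icc 0 T,
      ‖γ₁ t - γ₂ t‖ < barrier (C + 1) L t := by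
    intro L hL
    have hL0 : 0 < L := lt_of_lt_of_le (by positivity) hL
    refine norm_lt_of_eq_integral_integral (hγ₁cont.sub hγ₂cont) hη (hasDerivAt_barrier _ L)
      (hasDerivAt_mul_barrierExponent_mul_barrier _ L) ?_ (exp_pos _) ?_ fun s hs hsw => ?_
    · have := continuous_barrier (C + 1) L
      have := continuous_barrierExponent (C + 1) L
      fun_prop
    · exact (mul_pos (mul_pos (by positivity) (barrierExponent_pos hL0)) (exp_pos _)).le
    · have hY := two_le_barrierExponent (by positivity) hL hs.2
      calc ‖E s (γ₁ s) - E s (γ₂ s)‖ ≤ C * (barrierExponent (C + 1) L s ^ 2 *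
            exp (-barrierExponent (C + 1) L s)) :=
            le_of_forall_mul_sq_mul_rpow_le hn0 hC₀.le hY (norm_nonneg _) hsw
              fun p hp => hEhold p hp s hs _ _
        _ ≤ _ := mul_sq_mul_exp_neg_le_barrier hY
  intro t ht
  have hle : ‖γ₁ t - γ₂ t‖ ≤ 0 :=
    ge_of_tendsto tendsto_barrier_atTop <| (eventually_ge_atTop _).mono fun L hL =>
      (hbarrier L hL t ht).le
  exact sub_eq_zero.mp (norm_le_zero_iff.mp hle)

/-- Uniqueness for the second-order ODE `ẍ = E(t,x)`: if `E` is bounded,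
measurable, and satisfies the `p`-dependent Hölder estimate
`|E(t,x) - E(t,y)| ≤ C₀ p² |x-y|^{1-n/p}` for every `p > n`, then two continuous curves solving
`γ(t) = x₀ + t v₀ + ∫₀ᵗ ∫₀ˢ E(τ, γ(τ)) dτ ds` on `[0,T]` coincide. -/
theorem stmt17 (n : ℕ) (hn : n = 2 ∨ n = 3) (T : ℝ) (hT : 0 < T)
    (E : ℝ → EuclideanSpace ℝ (Fin n) → EuclideanSpace ℝ (Fin n))
    (hEbdd : ∃ K : ℝ, ∀ t x, ‖E t x‖ ≤ K)
    (hEmeas : Measurable (Function.uncurry E))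
    (C₀ : ℝ) (hC₀ : 0 < C₀)
    (hEhold : ∀ p : ℝ, (n : ℝ) < p → ∀ t ∈ Set.Icc 0 T,
      ∀ x y : EuclideanSpace ℝ (Fin n),
        ‖E t x - E t y‖ ≤ C₀ * p ^ 2 * ‖x - y‖ ^ (1 - (n : ℝ) / p))
    (x₀ v₀ : EuclideanSpace ℝ (Fin n))
    (γ₁ γ₂ : ℝ → EuclideanSpace ℝ (Fin n))
    (hγ₁cont : ContinuousOn γ₁ (Set.Icc 0 T)) (hγ₂cont : ContinuousOn γ₂ (Set.Icc 0 T))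
    (hγ₁ : ∀ t ∈ Set.Icc 0 T,
      γ₁ t = x₀ + t • v₀ + ∫ s in (0:ℝ)..t, ∫ τ in (0:ℝ)..s, E τ (γ₁ τ))
    (hγ₂ : ∀ t ∈ Set.Icc 0 T,
      γ₂ t = x₀ + t • v₀ + ∫ s in (0:ℝ)..t, ∫ τ in (0:ℝ)..s, E τ (γ₂ τ)) :
    ∀ t ∈ Set.Icc 0 T, γ₁ t = γ₂ t :=
  stmt17_general n hn T E hEbdd hEmeas C₀ hC₀ hEhold x₀ v₀ γ₁ γ₂ hγ₁cont hγ₂cont hγ₁ hγ₂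
end
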